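/- arXiv:1310.2515 — 11 statements merged into one kernel-verified Lean document; each statement's English description precedes it below -/
import Mathlib

section
/- Let q ∈ (0,1) be a real number. Define the q-gamma function Γ_q(z) = (1−q)^{1−z} · (q;q)_∞ / (q^z;q)_∞ for real z > 0. Then the function z ↦ log Γ_q(z) is differentiable on (0,∞), and for every z > 0 its derivative (the q-digamma function Ψ_q(z)) equals −log(1−q) + log q · Σ_{k=0}^∞ q^{z+k}/(1 − q^{z+k}). -/
/-! Taking logarithms turns `Γ_q` into
`(1 - z) log (1 - q) + log (q;q)_∞ - ∑ₖ log (1 - q^(z+k))`.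
Near `z₀ > 0`, i.e. for `z > z₀/2`, the termwise derivatives
`-log q · q^(z+k)/(1 - q^(z+k))` are dominated by a geometric series in `q^k`,
so the series may be differentiated term by term. -/

open Real Filter Topology

lemma Real.tprod_pos_of_summable_log {ι : Type*} {f : ι → ℝ} (hf : ∀ i, 0 < f i)
    (hs : Summable fun i => log (f i)) : 0 < ∏' i, f i := by
  rw [← rexp_tsum_eq_tprod hf hs]
  exact exp_pos _

lemma Real.log_tprod_of_summable_log {ι : Type*} {f : ι → ℝ} (hf : ∀ i, 0 < f i)
    (hs : Summable fun i => log (f i)) : log (∏' i, f i) = ∑' i, log (f i) := by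
  rw [← rexp_tsum_eq_tprod hf hs, log_exp]

section QShift

variable {q : ℝ}

lemma summable_rpow_add_natCast (hq0 : 0 < q) (hq1 : q < 1) (y : ℝ) :
    Summable fun k : ℕ => q ^ (y + k) := by
  simp_rw [rpow_add_natCast hq0.ne']
  exact (summable_geometric_of_lt_one hq0.le hq1).mul_left _

lemma summable_log_one_sub_rpow_add_natCast (hq0 : 0 < q) (hq1 : q < 1) (y : ℝ) :
    Summable fun k : ℕ => log (1 - q ^ (y + k)) := by
  simpa only [sub_eq_add_neg] using
    summable_log_one_add_of_summable (summable_rpow_add_natCast hq0 hq1 y).neg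

lemma rpow_add_natCast_lt_one (hq0 : 0 < q) (hq1 : q < 1) {y : ℝ} (hy : 0 < y) (k : ℕ) :
    q ^ (y + k) < 1 :=
  rpow_lt_one hq0.le hq1 (by positivity)

lemma tprod_one_sub_rpow_add_natCast_pos (hq0 : 0 < q) (hq1 : q < 1) {y : ℝ} (hy : 0 < y) :
    0 < ∏' k : ℕ, (1 - q ^ (y + k)) :=
  tprod_pos_of_summable_log (fun k => sub_pos.2 (rpow_add_natCast_lt_one hq0 hq1 hy k))
    (summable_log_one_sub_rpow_add_natCast hq0 hq1 y)

lemma log_tprod_one_sub_rpow_add_natCast (hq0 : 0 < q) (hq1 : q < 1) {y : ℝ} (hy : 0 < y) :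
    log (∏' k : ℕ, (1 - q ^ (y + k))) = ∑' k : ℕ, log (1 - q ^ (y + k)) :=
  log_tprod_of_summable_log (fun k => sub_pos.2 (rpow_add_natCast_lt_one hq0 hq1 hy k))
    (summable_log_one_sub_rpow_add_natCast hq0 hq1 y)

lemma hasDerivAt_log_one_sub_rpow_add_natCast (hq0 : 0 < q) (hq1 : q < 1) {y : ℝ} (hy : 0 < y)
    (k : ℕ) :
    HasDerivAt (fun y : ℝ => log (1 - q ^ (y + k)))
      (-(log q * (q ^ (y + k) / (1 - q ^ (y + k))))) y := by
  have hpow : HasDerivAt (fun y : ℝ => q ^ (y + k)) (log q * 1 * q ^ (y + k)) y :=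
    ((hasDerivAt_id y).add_const _).const_rpow hq0
  convert (hpow.const_sub 1).log (sub_pos.2 (rpow_add_natCast_lt_one hq0 hq1 hy k)).ne' using 1
  ring

lemma rpow_add_natCast_div_one_sub_le (hq0 : 0 < q) (hq1 : q < 1) {a y : ℝ} (ha : 0 < a)
    (hay : a ≤ y) (k : ℕ) :
    q ^ (y + k) / (1 - q ^ (y + k)) ≤ q ^ a / (1 - q ^ a) * q ^ k := by
  have hya : q ^ y ≤ q ^ a := rpow_le_rpow_of_exponent_ge hq0 hq1.le hay
  have hqk : q ^ k ≤ 1 := pow_le_one₀ hq0.le hq1.le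
  have hyk : q ^ (y + k) ≤ q ^ a := by
    rw [rpow_add_natCast hq0.ne']
    exact (mul_le_of_le_one_right (by positivity) hqk).trans hya
  have ha1 : 0 < 1 - q ^ a := sub_pos.2 (rpow_lt_one hq0.le hq1 ha)
  calc q ^ (y + k) / (1 - q ^ (y + k)) ≤ q ^ y * q ^ k / (1 - q ^ a) := by
        rw [rpow_add_natCast hq0.ne']
        gcongr
        rwa [← rpow_add_natCast hq0.ne']
    _ ≤ q ^ a * q ^ k / (1 - q ^ a) := by gcongr
    _ = q ^ a / (1 - q ^ a) * q ^ k := by ring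

lemma hasDerivAt_tsum_log_one_sub_rpow_add_natCast (hq0 : 0 < q) (hq1 : q < 1) {z : ℝ}
    (hz : 0 < z) :
    HasDerivAt (fun y : ℝ => ∑' k : ℕ, log (1 - q ^ (y + k)))
      (-(log q * ∑' k : ℕ, q ^ (z + k) / (1 - q ^ (z + k)))) z := by
  have hz2 : 0 < z / 2 := half_pos hz
  have hbound : ∀ (k : ℕ) (y : ℝ), y ∈ Set.Ioi (z / 2) →
      ‖-(log q * (q ^ (y + k) / (1 - q ^ (y + k))))‖ ≤
        |log q| * (q ^ (z / 2) / (1 - q ^ (z / 2)) * q ^ k) := by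
    intro k y hy
    have hy0 : 0 < y := hz2.trans hy
    have hpos : 0 ≤ q ^ (y + k) / (1 - q ^ (y + k)) :=
      div_nonneg (by positivity) (sub_pos.2 (rpow_add_natCast_lt_one hq0 hq1 hy0 k)).le
    rw [norm_neg, norm_mul, norm_of_nonneg hpos, norm_eq_abs]
    gcongr
    exact rpow_add_natCast_div_one_sub_le hq0 hq1 hz2 (le_of_lt hy) k
  have h := hasDerivAt_tsum_of_isPreconnected
    (((summable_geometric_of_lt_one hq0.le hq1).mul_left _).mul_left _) isOpen_Ioi
    isPreconnected_Ioi
    (fun k y hy => hasDerivAt_log_one_sub_rpow_add_natCast hq0 hq1 (hz2.trans hy) k) hbound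
    (half_lt_self hz) (summable_log_one_sub_rpow_add_natCast hq0 hq1 z) (half_lt_self hz)
  rwa [tsum_neg, tsum_mul_left] at h

end QShift

/-- For `q ∈ (0,1)`, the q-Gamma function
`Γ_q(z) = (1−q)^(1−z) · (q;q)_∞ / (q^z;q)_∞` has the property that
`z ↦ log Γ_q(z)` is differentiable on `(0,∞)` with derivative (the q-digamma
function) equal to `−log(1−q) + log q · Σ_{k=0}^∞ q^(z+k)/(1 − q^(z+k))`. -/
theorem stmt_0 (q : ℝ) (hq : q ∈ Set.Ioo (0 : ℝ) 1) :
    ∀ z : ℝ, 0 < z →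
      HasDerivAt
        (fun z : ℝ =>
          Real.log ((1 - q) ^ (1 - z) * (∏' k : ℕ, (1 - q * q ^ k)) /
            ∏' k : ℕ, (1 - q ^ (z + (k : ℝ)))))
        (-Real.log (1 - q) +
          Real.log q * ∑' k : ℕ, q ^ (z + (k : ℝ)) / (1 - q ^ (z + (k : ℝ)))) z := by
  obtain ⟨hq0, hq1⟩ := hq
  intro z hz
  set C := ∏' k : ℕ, (1 - q * q ^ k)
  have hC : 0 < C := by
    simpa only [rpow_add_natCast hq0.ne', rpow_one] using
      tprod_one_sub_rpow_add_natCast_pos hq0 hq1 one_pos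
  have heq : (fun y : ℝ => log ((1 - q) ^ (1 - y) * C / ∏' k : ℕ, (1 - q ^ (y + k))))
      =ᶠ[𝓝 z] fun y => (1 - y) * log (1 - q) + log C - ∑' k : ℕ, log (1 - q ^ (y + k)) := by
    filter_upwards [Ioi_mem_nhds hz] with y hy
    have h1q : 0 < 1 - q := sub_pos.2 hq1
    rw [log_div (by positivity) (tprod_one_sub_rpow_add_natCast_pos hq0 hq1 hy).ne',
      log_mul (by positivity) hC.ne', log_rpow h1q,
      log_tprod_one_sub_rpow_add_natCast hq0 hq1 hy]
  have hlin : HasDerivAt (fun y : ℝ => (1 - y) * log (1 - q)) (-1 * log (1 - q)) z :=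
    ((hasDerivAt_id z).const_sub 1).mul_const _
  have hseries := hasDerivAt_tsum_log_one_sub_rpow_add_natCast hq0 hq1 hz
  refine (((hlin.add_const _).sub hseries).congr_of_eventuallyEq heq).congr_deriv ?_
  ring
end

section
/- Let q ∈ (0,1). Then f(θ)/κ(θ) → 1 and 1/κ(θ) → 0 as θ → 0+, while f(θ)/κ(θ) → 0 and 1/κ(θ) → 1−q as θ → +∞. In other words, the parametric curve θ ↦ (f(θ)/κ(θ), 1/κ(θ)) describing the macroscopic shape of the q-TASEP particle positions touches the axes at the points (1,0) (as θ → 0+) and (0, 1−q) (as θ → ∞). -/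
/-!
Substitute `x = q ^ θ`, so that `1 - q ^ (θ + k) = 1 - x q ^ k`: then `θ → 0+` becomes `x → 1-`
and `θ → ∞` becomes `x → 0+`, and `κ(θ) = kappa q x`, `f(θ) = x² kappa₂ q x`. Since
`1 - x ≤ 1 - x q ^ k ≤ 1`, comparison with geometric series gives
`1/(1-q) ≤ κ ≤ 1/((1-q)(1-x)²)`, while the `k = 0` term gives `κ ≥ 1/(1-x)²`. Moreover
`kappa₂ ≤ κ` and `κ - kappa₂ = Σ q^k (1 - q^k)/(1 - x q^k)²` stays bounded, so
`x² (1 - (κ - kappa₂)/κ) = f/κ ≤ x²`, and all four limits follow by squeezing.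
-/

open Filter Topology Set

namespace QTasep

noncomputable def kappa (q x : ℝ) : ℝ := ∑' k : ℕ, q ^ k / (1 - x * q ^ k) ^ 2

noncomputable def kappa₂ (q x : ℝ) : ℝ := ∑' k : ℕ, (q ^ k) ^ 2 / (1 - x * q ^ k) ^ 2

variable {q x : ℝ}

lemma one_sub_le_one_sub_mul_pow (hq : q ∈ Icc (0 : ℝ) 1) (hx : 0 ≤ x) (k : ℕ) :
    1 - x ≤ 1 - x * q ^ k := by
  have := mul_le_of_le_one_right hx (pow_le_one₀ hq.1 hq.2 (n := k))
  linarith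

lemma one_sub_mul_pow_le_one (hq : 0 ≤ q) (hx : 0 ≤ x) (k : ℕ) : 1 - x * q ^ k ≤ 1 := by
  have : 0 ≤ x * q ^ k := by positivity
  linarith

lemma one_sub_mul_pow_pos (hq : q ∈ Icc (0 : ℝ) 1) (hx : x ∈ Ico (0 : ℝ) 1) (k : ℕ) :
    0 < 1 - x * q ^ k :=
  (sub_pos.2 hx.2).trans_le (one_sub_le_one_sub_mul_pow hq hx.1 k)

lemma kappa_term_le (hq : q ∈ Icc (0 : ℝ) 1) (hx : x ∈ Ico (0 : ℝ) 1) (k : ℕ) :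
    q ^ k / (1 - x * q ^ k) ^ 2 ≤ q ^ k / (1 - x) ^ 2 := by
  have := one_sub_le_one_sub_mul_pow hq hx.1 k
  have := pow_nonneg hq.1 k
  have := sub_pos.2 hx.2
  gcongr

lemma summable_kappa (hq : q ∈ Ico (0 : ℝ) 1) (hx : x ∈ Ico (0 : ℝ) 1) :
    Summable fun k : ℕ => q ^ k / (1 - x * q ^ k) ^ 2 :=
  .of_nonneg_of_le (fun k => div_nonneg (pow_nonneg hq.1 k) (sq_nonneg _)) (kappa_term_le (Ico_subset_Icc_self hq) hx)
    ((summable_geometric_of_lt_one hq.1 hq.2).div_const _)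

lemma kappa₂_term_le (hq : q ∈ Icc (0 : ℝ) 1) (k : ℕ) :
    (q ^ k) ^ 2 / (1 - x * q ^ k) ^ 2 ≤ q ^ k / (1 - x * q ^ k) ^ 2 := by
  have := pow_le_one₀ hq.1 hq.2 (n := k)
  gcongr
  nlinarith [pow_nonneg hq.1 k]

lemma summable_kappa₂ (hq : q ∈ Ico (0 : ℝ) 1) (hx : x ∈ Ico (0 : ℝ) 1) :
    Summable fun k : ℕ => (q ^ k) ^ 2 / (1 - x * q ^ k) ^ 2 :=
  .of_nonneg_of_le (fun _ => div_nonneg (sq_nonneg _) (sq_nonneg _))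
    (kappa₂_term_le (Ico_subset_Icc_self hq)) (summable_kappa hq hx)

lemma kappa₂_le_kappa (hq : q ∈ Ico (0 : ℝ) 1) (hx : x ∈ Ico (0 : ℝ) 1) :
    kappa₂ q x ≤ kappa q x :=
  (summable_kappa₂ hq hx).tsum_le_tsum (kappa₂_term_le (Ico_subset_Icc_self hq))
    (summable_kappa hq hx)

lemma inv_one_sub_sq_le_kappa (hq : q ∈ Ico (0 : ℝ) 1) (hx : x ∈ Ico (0 : ℝ) 1) :
    ((1 - x) ^ 2)⁻¹ ≤ kappa q x := by
  simpa [kappa] using (summable_kappa hq hx).le_tsum 0 fun k _ =>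
    div_nonneg (pow_nonneg hq.1 k) (sq_nonneg _)

lemma inv_one_sub_le_kappa (hq : q ∈ Ico (0 : ℝ) 1) (hx : x ∈ Ico (0 : ℝ) 1) :
    (1 - q)⁻¹ ≤ kappa q x := by
  rw [← tsum_geometric_of_lt_one hq.1 hq.2]
  refine (summable_geometric_of_lt_one hq.1 hq.2).tsum_le_tsum (fun k => ?_)
    (summable_kappa hq hx)
  have hpos := one_sub_mul_pow_pos (Ico_subset_Icc_self hq) hx k
  have hle := one_sub_mul_pow_le_one hq.1 hx.1 k
  rw [le_div_iff₀ (by positivity)]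
  exact mul_le_of_le_one_right (pow_nonneg hq.1 k) (pow_le_one₀ hpos.le hle)

lemma kappa_pos (hq : q ∈ Ico (0 : ℝ) 1) (hx : x ∈ Ico (0 : ℝ) 1) : 0 < kappa q x :=
  (inv_pos.2 (sub_pos.2 hq.2)).trans_le (inv_one_sub_le_kappa hq hx)

lemma kappa_le (hq : q ∈ Ico (0 : ℝ) 1) (hx : x ∈ Ico (0 : ℝ) 1) :
    kappa q x ≤ ((1 - q) * (1 - x) ^ 2)⁻¹ := by
  have hgeom : ∑' k : ℕ, q ^ k / (1 - x) ^ 2 = ((1 - q) * (1 - x) ^ 2)⁻¹ := by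
    rw [tsum_div_const, tsum_geometric_of_lt_one hq.1 hq.2, mul_inv, div_eq_mul_inv]
  rw [← hgeom]
  exact (summable_kappa hq hx).tsum_le_tsum (kappa_term_le (Ico_subset_Icc_self hq) hx)
    ((summable_geometric_of_lt_one hq.1 hq.2).div_const _)

/-- The `k = 0` term vanishes; for `k ≥ 1` both `1 - q` and `1 - q ^ k` are at most
`1 - x * q ^ k`. -/
lemma kappa_sub_kappa₂_term_le (hq : q ∈ Ico (0 : ℝ) 1) (hx : x ∈ Ico (0 : ℝ) 1) (k : ℕ) :
    q ^ k / (1 - x * q ^ k) ^ 2 - (q ^ k) ^ 2 / (1 - x * q ^ k) ^ 2 ≤ q ^ k / (1 - q) := by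
  have hd := one_sub_mul_pow_pos (Ico_subset_Icc_self hq) hx k
  have hxq : x * q ^ k ≤ q ^ k := mul_le_of_le_one_left (pow_nonneg hq.1 k) hx.2.le
  have key : (1 - q) * (1 - q ^ k) ≤ (1 - x * q ^ k) ^ 2 := by
    rcases k with _ | n
    · simp [sq_nonneg]
    · have : q ^ (n + 1) ≤ q := pow_le_of_le_one hq.1 hq.2.le n.succ_ne_zero
      have h1 : 1 - q ≤ 1 - x * q ^ (n + 1) := by linarith
      have h2 : 1 - q ^ (n + 1) ≤ 1 - x * q ^ (n + 1) := by linarith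
      simpa [sq] using mul_le_mul h1 h2 (sub_nonneg.2 (pow_le_one₀ hq.1 hq.2.le)) hd.le
  rw [div_sub_div_same, div_le_div_iff₀ (by positivity) (sub_pos.2 hq.2)]
  nlinarith [pow_nonneg hq.1 k]

lemma kappa_sub_kappa₂_le (hq : q ∈ Ico (0 : ℝ) 1) (hx : x ∈ Ico (0 : ℝ) 1) :
    kappa q x - kappa₂ q x ≤ ((1 - q) ^ 2)⁻¹ := by
  have hgeom : ∑' k : ℕ, q ^ k / (1 - q) = ((1 - q) ^ 2)⁻¹ := by
    rw [tsum_div_const, tsum_geometric_of_lt_one hq.1 hq.2, div_eq_mul_inv, ← mul_inv, sq]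
  rw [kappa, kappa₂, ← (summable_kappa hq hx).tsum_sub (summable_kappa₂ hq hx), ← hgeom]
  exact ((summable_kappa hq hx).sub (summable_kappa₂ hq hx)).tsum_le_tsum
    (kappa_sub_kappa₂_term_le hq hx) ((summable_geometric_of_lt_one hq.1 hq.2).div_const _)

lemma tendsto_one_sub_sq (a : ℝ) :
    Tendsto (fun x : ℝ => (1 - x) ^ 2) (𝓝 a) (𝓝 ((1 - a) ^ 2)) :=
  ((continuous_const.sub continuous_id).pow 2).tendsto a

lemma tendsto_inv_kappa_nhdsLT_one (hq : q ∈ Ico (0 : ℝ) 1) :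
    Tendsto (fun x => (kappa q x)⁻¹) (𝓝[<] 1) (𝓝 0) := by
  have hsq : Tendsto (fun x : ℝ => (1 - x) ^ 2) (𝓝[<] 1) (𝓝 0) := by
    simpa using (tendsto_one_sub_sq 1).mono_left nhdsWithin_le_nhds
  refine tendsto_of_tendsto_of_tendsto_of_le_of_le' tendsto_const_nhds hsq ?_ ?_ <;>
    filter_upwards [Ioo_mem_nhdsLT zero_lt_one] with x hx
  · exact (inv_pos.2 (kappa_pos hq (Ioo_subset_Ico_self hx))).le
  · have hx' := Ioo_subset_Ico_self hx
    exact inv_le_of_inv_le₀ (by have := hx.2; positivity) (inv_one_sub_sq_le_kappa hq hx')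

/-- `x² kappa₂ / kappa = x² (1 - (kappa - kappa₂) / kappa)`, and the correction is at most
`(1 - x)² / (1 - q)²`. -/
lemma tendsto_sq_mul_kappa₂_div_kappa_nhdsLT_one (hq : q ∈ Ico (0 : ℝ) 1) :
    Tendsto (fun x => x ^ 2 * kappa₂ q x / kappa q x) (𝓝[<] 1) (𝓝 1) := by
  have hsq : Tendsto (fun x : ℝ => ((1 - q) ^ 2)⁻¹ * (1 - x) ^ 2) (𝓝[<] 1) (𝓝 0) := by
    simpa using ((tendsto_one_sub_sq 1).const_mul _).mono_left nhdsWithin_le_nhds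
  have hcorr : Tendsto (fun x => (kappa q x - kappa₂ q x) / kappa q x) (𝓝[<] 1) (𝓝 0) := by
    refine tendsto_of_tendsto_of_tendsto_of_le_of_le' tendsto_const_nhds hsq ?_ ?_ <;>
      filter_upwards [Ioo_mem_nhdsLT zero_lt_one] with x hx <;>
      have hx' := Ioo_subset_Ico_self hx
    · exact div_nonneg (sub_nonneg.2 (kappa₂_le_kappa hq hx')) (kappa_pos hq hx').le
    · have hinv : (kappa q x)⁻¹ ≤ (1 - x) ^ 2 :=
        inv_le_of_inv_le₀ (by have := hx.2; positivity) (inv_one_sub_sq_le_kappa hq hx')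
      rw [div_eq_mul_inv]
      exact mul_le_mul (kappa_sub_kappa₂_le hq hx') hinv (inv_nonneg.2 (kappa_pos hq hx').le)
        (by positivity)
  have hlim : Tendsto (fun x : ℝ => x ^ 2 * (1 - (kappa q x - kappa₂ q x) / kappa q x))
      (𝓝[<] 1) (𝓝 1) := by
    simpa using ((continuous_pow 2).tendsto (1 : ℝ)).mono_left nhdsWithin_le_nhds |>.mul
      (tendsto_const_nhds.sub hcorr)
  refine hlim.congr' ?_
  filter_upwards [Ioo_mem_nhdsLT zero_lt_one] with x hx
  have := (kappa_pos hq (Ioo_subset_Ico_self hx)).ne'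
  field_simp
  ring

lemma tendsto_inv_kappa_nhdsGE_zero (hq : q ∈ Ico (0 : ℝ) 1) :
    Tendsto (fun x => (kappa q x)⁻¹) (𝓝[≥] 0) (𝓝 (1 - q)) := by
  have hsq : Tendsto (fun x : ℝ => (1 - q) * (1 - x) ^ 2) (𝓝[≥] 0) (𝓝 (1 - q)) := by
    simpa using ((tendsto_one_sub_sq 0).const_mul _).mono_left nhdsWithin_le_nhds
  refine tendsto_of_tendsto_of_tendsto_of_le_of_le' hsq tendsto_const_nhds ?_ ?_ <;>
    filter_upwards [Ico_mem_nhdsGE zero_lt_one] with x hx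
  · have := sub_pos.2 hq.2
    have := sub_pos.2 hx.2
    simpa [mul_inv] using inv_anti₀ (kappa_pos hq hx) (kappa_le hq hx)
  · exact inv_le_of_inv_le₀ (sub_pos.2 hq.2) (inv_one_sub_le_kappa hq hx)

lemma tendsto_sq_mul_kappa₂_div_kappa_nhdsGE_zero (hq : q ∈ Ico (0 : ℝ) 1) :
    Tendsto (fun x => x ^ 2 * kappa₂ q x / kappa q x) (𝓝[≥] 0) (𝓝 0) := by
  have hsq : Tendsto (fun x : ℝ => x ^ 2) (𝓝[≥] 0) (𝓝 0) := by
    simpa using ((continuous_pow 2).tendsto (0 : ℝ)).mono_left nhdsWithin_le_nhds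
  refine tendsto_of_tendsto_of_tendsto_of_le_of_le' tendsto_const_nhds hsq ?_ ?_ <;>
    filter_upwards [Ico_mem_nhdsGE zero_lt_one] with x hx <;>
    have hκ := kappa_pos hq hx
  · have : 0 ≤ kappa₂ q x :=
      tsum_nonneg fun k => div_nonneg (sq_nonneg _) (sq_nonneg _)
    positivity
  · rw [div_le_iff₀ hκ]
    exact mul_le_mul_of_nonneg_left (kappa₂_le_kappa hq hx) (sq_nonneg x)

lemma tsum_eq_kappa_rpow (hq : 0 < q) (θ : ℝ) :
    ∑' k : ℕ, q ^ k / (1 - q ^ (θ + (k : ℝ))) ^ 2 = kappa q (q ^ θ) := by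
  simp only [kappa, Real.rpow_add_natCast hq.ne']

lemma tsum_eq_rpow_sq_mul_kappa₂_rpow (hq : 0 < q) (θ : ℝ) :
    ∑' k : ℕ, q ^ (2 * θ + 2 * (k : ℝ)) / (1 - q ^ (θ + (k : ℝ))) ^ 2
      = (q ^ θ) ^ 2 * kappa₂ q (q ^ θ) := by
  rw [kappa₂, ← tsum_mul_left]
  refine tsum_congr fun k => ?_
  rw [← mul_add, mul_comm, Real.rpow_mul hq.le, Real.rpow_add_natCast hq.ne', Real.rpow_two,
    mul_pow, mul_div_assoc]

lemma tendsto_rpow_nhdsGT_zero (hq : q ∈ Ioo (0 : ℝ) 1) :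
    Tendsto (fun θ : ℝ => q ^ θ) (𝓝[>] 0) (𝓝[<] 1) := by
  refine tendsto_nhdsWithin_iff.2 ⟨?_, ?_⟩
  · simpa using (Real.continuousAt_const_rpow hq.1.ne' (b := 0)).tendsto.mono_left
      nhdsWithin_le_nhds
  · filter_upwards [self_mem_nhdsWithin] with θ hθ using Real.rpow_lt_one hq.1.le hq.2 hθ

lemma tendsto_rpow_atTop_nhdsGE_zero (hq : q ∈ Ioo (0 : ℝ) 1) :
    Tendsto (fun θ : ℝ => q ^ θ) atTop (𝓝[≥] 0) :=
  tendsto_nhdsWithin_iff.2 ⟨tendsto_rpow_atTop_of_base_lt_one q (by linarith [hq.1]) hq.2,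
    .of_forall fun θ => Real.rpow_nonneg hq.1.le θ⟩

end QTasep

open QTasep in
/-- For `q ∈ (0,1)`, with `κ(θ) = Σ q^k/(1−q^(θ+k))²` and
`f(θ) = Σ q^(2θ+2k)/(1−q^(θ+k))²`, one has `f/κ → 1` and `1/κ → 0` as `θ → 0+`,
and `f/κ → 0` and `1/κ → 1−q` as `θ → ∞`: the parametric curve
`θ ↦ (f(θ)/κ(θ), 1/κ(θ))` touches the axes at `(1,0)` and `(0,1−q)`. -/
theorem stmt_3 (q : ℝ) (hq : q ∈ Set.Ioo (0 : ℝ) 1) :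
    let κ : ℝ → ℝ := fun θ => ∑' k : ℕ, q ^ (k : ℕ) / (1 - q ^ (θ + (k : ℝ))) ^ 2
    let f : ℝ → ℝ := fun θ => ∑' k : ℕ, q ^ (2 * θ + 2 * (k : ℝ)) / (1 - q ^ (θ + (k : ℝ))) ^ 2
    Filter.Tendsto (fun θ => f θ / κ θ) (nhdsWithin 0 (Set.Ioi 0)) (nhds 1) ∧
    Filter.Tendsto (fun θ => 1 / κ θ) (nhdsWithin 0 (Set.Ioi 0)) (nhds 0) ∧
    Filter.Tendsto (fun θ => f θ / κ θ) Filter.atTop (nhds 0) ∧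
    Filter.Tendsto (fun θ => 1 / κ θ) Filter.atTop (nhds (1 - q)) := by
  intro κ f
  have hκ : κ = fun θ => kappa q (q ^ θ) := funext (tsum_eq_kappa_rpow hq.1)
  have hf : f = fun θ => (q ^ θ) ^ 2 * kappa₂ q (q ^ θ) :=
    funext (tsum_eq_rpow_sq_mul_kappa₂_rpow hq.1)
  have hq' := Ioo_subset_Ico_self hq
  simp only [hκ, hf, one_div]
  exact ⟨(tendsto_sq_mul_kappa₂_div_kappa_nhdsLT_one hq').comp (tendsto_rpow_nhdsGT_zero hq),
    (tendsto_inv_kappa_nhdsLT_one hq').comp (tendsto_rpow_nhdsGT_zero hq),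
    (tendsto_sq_mul_kappa₂_div_kappa_nhdsGE_zero hq').comp (tendsto_rpow_atTop_nhdsGE_zero hq),
    (tendsto_inv_kappa_nhdsGE_zero hq').comp (tendsto_rpow_atTop_nhdsGE_zero hq)⟩
end

section
/- Let q ∈ (0,1) and α ∈ (0,1). Then the mean of the q-geometric distribution with parameter α satisfies E(gap) := Σ_{k=0}^∞ k · (α;q)_∞ α^k/(q;q)_k = α Σ_{k=0}^∞ q^k/(1 − α q^k), and consequently the particle density ρ := 1/(1 + E(gap)) equals log q / (log q + log(1−q) + Ψ_q(log α / log q)). (Together with E(1 − q^{gap}) = α, this gives the particle current j(ρ) = α ρ under the local stationarity assumption.) -/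
/-!
Write `e(x) = ∑ xᵏ/(q;q)ₖ` and `M(x) = ∑ k xᵏ/(q;q)ₖ`; the q-geometric law with parameter `α`
has weights `αᵏ/((q;q)ₖ e(α))`, so its mean is `M(α)/e(α)`. Since `(q;q)ₖ = (q;q)ₖ₋₁ (1 - qᵏ)`,
comparing coefficients gives the q-difference equations `e(qx) = (1 - x) e(x)` and
`M(qx) = (1 - x) M(x) - x e(x)`. Iterating the first and using `e(qⁿx) → e(0) = 1` gives Euler's
identity `e(x) (x;q)_∞ = 1`. The second says that `H = M/e` satisfies
`H(qx) = H(x) - x/(1 - x)`, which telescopes, as `H(qⁿx) → 0`, to `H(x) = ∑ x qⁱ/(1 - x qⁱ)`.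
For `z = log α / log q` one has `q^(z + i) = α qⁱ`, so this sum is also the series in `Ψ_q(z)`.
-/

open Filter Finset Topology

noncomputable def qPochhammer (a q : ℝ) (n : ℕ) : ℝ := ∏ i ∈ range n, (1 - a * q ^ i)

noncomputable def qExpTerm (q x : ℝ) (k : ℕ) : ℝ := x ^ k / qPochhammer q q k

noncomputable def qExp (q x : ℝ) : ℝ := ∑' k, qExpTerm q x k

noncomputable def qExpMoment (q x : ℝ) : ℝ := ∑' k : ℕ, (k : ℝ) * qExpTerm q x k

lemma qPochhammer_succ (a q : ℝ) (n : ℕ) :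
    qPochhammer a q (n + 1) = qPochhammer a q n * (1 - a * q ^ n) :=
  prod_range_succ _ _

lemma qPochhammer_self (q : ℝ) (n : ℕ) :
    qPochhammer q q n = ∏ i ∈ range n, (1 - q ^ (i + 1)) := by
  simp only [qPochhammer, pow_succ']

lemma qExpTerm_zero (q x : ℝ) : qExpTerm q x 0 = 1 := by
  simp [qExpTerm, qPochhammer]

lemma qExpTerm_mul (q y x : ℝ) (k : ℕ) : qExpTerm q (y * x) k = y ^ k * qExpTerm q x k := by
  rw [qExpTerm, qExpTerm, mul_pow, mul_div_assoc]

lemma tendsto_tsum_pow_mul {ι : Type*} {l : Filter ι} {a : ℕ → ℝ} (ha : Summable a) {y : ι → ℝ}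
    (hy : Tendsto y l (𝓝 0)) : Tendsto (fun i => ∑' k, y i ^ k * a k) l (𝓝 (a 0)) := by
  have hlim : ∑' k, (0 : ℝ) ^ k * a k = a 0 := by
    rw [tsum_eq_single 0 fun k hk => by simp [zero_pow hk]]
    simp
  rw [← hlim]
  refine tendsto_tsum_of_dominated_convergence ha.abs (fun k => (hy.pow k).mul_const _) ?_
  filter_upwards [hy.abs.eventually_le_const (by simp : |(0:ℝ)| < 1)] with i hi k
  rw [Real.norm_eq_abs, abs_mul, abs_pow]
  exact mul_le_of_le_one_left (abs_nonneg _) (pow_le_one₀ (abs_nonneg _) hi)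

section

variable {q x : ℝ}

lemma abs_pow_mul_le (hq : |q| ≤ 1) (n : ℕ) : |q ^ n * x| ≤ |x| := by
  rw [abs_mul, abs_pow]
  exact mul_le_of_le_one_left (abs_nonneg x) (pow_le_one₀ (abs_nonneg q) hq)

lemma abs_mul_lt_one (hq : |q| < 1) (hx : |x| < 1) : |q * x| < 1 := by
  rw [abs_mul]
  exact mul_lt_one_of_nonneg_of_lt_one_left (abs_nonneg q) hq hx.le

lemma one_sub_mul_pow_ne_zero (hq : |q| ≤ 1) (hx : |x| < 1) (n : ℕ) : 1 - x * q ^ n ≠ 0 := by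
  have : x * q ^ n < 1 := by
    rw [mul_comm]
    exact (le_abs_self _).trans_lt ((abs_pow_mul_le hq n).trans_lt hx)
  exact (sub_pos.2 this).ne'

lemma one_sub_pow_succ_ne_zero (hq : |q| < 1) (n : ℕ) : 1 - q ^ (n + 1) ≠ 0 := by
  simpa [pow_succ'] using one_sub_mul_pow_ne_zero hq.le hq n

lemma qExpTerm_succ (hq : |q| < 1) (k : ℕ) :
    qExpTerm q x (k + 1) * (1 - q ^ (k + 1)) = x * qExpTerm q x k := by
  have hP : qPochhammer q q k ≠ 0 :=
    prod_ne_zero_iff.2 fun i _ => one_sub_mul_pow_ne_zero hq.le hq i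
  have h1 := one_sub_pow_succ_ne_zero hq k
  rw [qExpTerm, qExpTerm, qPochhammer_succ, ← pow_succ']
  field_simp
  ring

lemma summable_qExpTerm (hq : |q| < 1) (hx : |x| < 1) : Summable (qExpTerm q x) := by
  obtain ⟨r, hxr, hr1⟩ := exists_between hx
  have hratio : Tendsto (fun k : ℕ => |x| / |1 - q ^ (k + 1)|) atTop (𝓝 (|x| / |1 - 0|)) := by
    refine tendsto_const_nhds.div ((tendsto_const_nhds.sub ?_).abs) (by simp)
    exact (tendsto_pow_atTop_nhds_zero_of_abs_lt_one hq).comp (tendsto_add_atTop_nat 1)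
  rw [sub_zero, abs_one, div_one] at hratio
  refine summable_of_ratio_norm_eventually_le hr1 ?_
  filter_upwards [hratio.eventually_le_const hxr] with k hk
  rw [Real.norm_eq_abs, Real.norm_eq_abs,
    eq_div_of_mul_eq (one_sub_pow_succ_ne_zero hq k) (qExpTerm_succ hq k), abs_div,
    abs_mul, mul_div_right_comm]
  exact mul_le_mul_of_nonneg_right hk (abs_nonneg _)

lemma summable_natCast_mul_qExpTerm (hq : |q| < 1) (hx : |x| < 1) :
    Summable fun k : ℕ => (k : ℝ) * qExpTerm q x k := by
  obtain ⟨r, hxr, hr1⟩ := exists_between hx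
  have hr : 0 < r := (abs_nonneg x).trans_lt hxr
  have hxr' : |x / r| < 1 := by rwa [abs_div, abs_of_pos hr, div_lt_one hr]
  have hsum := (summable_qExpTerm hq (by rwa [abs_of_pos hr])).abs
  refine hsum.of_norm_bounded_eventually_nat ?_
  filter_upwards [(tendsto_self_mul_const_pow_of_abs_lt_one hxr').abs.eventually_le_const
    (by simp : |(0:ℝ)| < 1)] with k hk
  have hxk : x = x / r * r := (div_mul_cancel₀ x hr.ne').symm
  rw [Real.norm_eq_abs, hxk, qExpTerm_mul, ← mul_assoc, abs_mul]
  exact mul_le_of_le_one_left (abs_nonneg _) hk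

lemma hasSum_mul_qExpTerm_mul_one_sub_pow (hq : |q| < 1) {c : ℕ → ℝ}
    (hc : Summable fun k => c (k + 1) * qExpTerm q x k) :
    HasSum (fun k => c k * qExpTerm q x k * (1 - q ^ k))
      (x * ∑' k, c (k + 1) * qExpTerm q x k) := by
  refine (hasSum_nat_add_iff' 1).1 ?_
  simp only [sum_range_one, pow_zero, sub_self, mul_zero, sub_zero, mul_assoc,
    qExpTerm_succ hq]
  simpa only [mul_left_comm x] using hc.hasSum.mul_left x

lemma qExp_q_mul (hq : |q| < 1) (hx : |x| < 1) : qExp q (q * x) = (1 - x) * qExp q x := by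
  have hdiff : HasSum (fun k => qExpTerm q x k * (1 - q ^ k)) (qExp q x - qExp q (q * x)) := by
    have e : (fun k => qExpTerm q x k * (1 - q ^ k))
        = fun k => qExpTerm q x k - qExpTerm q (q * x) k := by
      funext k
      rw [qExpTerm_mul]
      ring
    rw [e]
    exact (summable_qExpTerm hq hx).hasSum.sub
      (summable_qExpTerm hq (abs_mul_lt_one hq hx)).hasSum
  have hshift := hasSum_mul_qExpTerm_mul_one_sub_pow (c := fun _ => 1) hq
    (by simpa using summable_qExpTerm hq hx)
  simp only [one_mul] at hshift
  unfold qExp at *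
  linear_combination -hdiff.unique hshift

lemma qExpMoment_q_mul (hq : |q| < 1) (hx : |x| < 1) :
    qExpMoment q (q * x) = (1 - x) * qExpMoment q x - x * qExp q x := by
  have hdiff : HasSum (fun k : ℕ => (k : ℝ) * qExpTerm q x k * (1 - q ^ k))
      (qExpMoment q x - qExpMoment q (q * x)) := by
    have e : (fun k : ℕ => (k : ℝ) * qExpTerm q x k * (1 - q ^ k))
        = fun k : ℕ => (k : ℝ) * qExpTerm q x k - k * qExpTerm q (q * x) k := by
      funext k
      rw [qExpTerm_mul]
      ring
    rw [e]
    exact (summable_natCast_mul_qExpTerm hq hx).hasSum.sub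
      (summable_natCast_mul_qExpTerm hq (abs_mul_lt_one hq hx)).hasSum
  have hM := summable_natCast_mul_qExpTerm hq hx
  have hF := summable_qExpTerm hq hx
  have hshift := hasSum_mul_qExpTerm_mul_one_sub_pow (c := fun k : ℕ => (k : ℝ)) hq
    (by simpa only [Nat.cast_succ, add_one_mul] using hM.add hF)
  simp only [Nat.cast_succ, add_one_mul, hM.tsum_add hF] at hshift
  unfold qExp qExpMoment at *
  linear_combination -hdiff.unique hshift

lemma qExp_pow_mul (hq : |q| < 1) (hx : |x| < 1) (n : ℕ) :
    qExp q (q ^ n * x) = qPochhammer x q n * qExp q x := by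
  induction n with
  | zero => simp [qPochhammer]
  | succ n ih =>
    rw [pow_succ', mul_assoc, qExp_q_mul hq ((abs_pow_mul_le hq.le n).trans_lt hx), ih,
      qPochhammer_succ]
    ring

lemma tendsto_qExp_pow_mul (hq : |q| < 1) (hx : |x| < 1) :
    Tendsto (fun n => qExp q (q ^ n * x)) atTop (𝓝 1) := by
  simp only [qExp, qExpTerm_mul]
  simpa [qExpTerm_zero] using
    tendsto_tsum_pow_mul (summable_qExpTerm hq hx) (tendsto_pow_atTop_nhds_zero_of_abs_lt_one hq)

lemma tendsto_qExpMoment_pow_mul (hq : |q| < 1) (hx : |x| < 1) :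
    Tendsto (fun n => qExpMoment q (q ^ n * x)) atTop (𝓝 0) := by
  simp only [qExpMoment, qExpTerm_mul, mul_left_comm (_ : ℝ) (_ ^ _)]
  simpa using tendsto_tsum_pow_mul (summable_natCast_mul_qExpTerm hq hx)
    (tendsto_pow_atTop_nhds_zero_of_abs_lt_one hq)

lemma multipliable_one_sub_mul_pow (hq : |q| < 1) (x : ℝ) :
    Multipliable fun i : ℕ => 1 - x * q ^ i := by
  simpa [sub_eq_add_neg] using Real.multipliable_one_add_of_summable
    ((summable_geometric_of_abs_lt_one hq).mul_left x).neg

theorem qExp_mul_tprod_one_sub_mul_pow (hq : |q| < 1) (hx : |x| < 1) :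
    qExp q x * ∏' i : ℕ, (1 - x * q ^ i) = 1 := by
  have hP : Tendsto (qPochhammer x q) atTop (𝓝 (∏' i : ℕ, (1 - x * q ^ i))) :=
    (multipliable_one_sub_mul_pow hq x).tendsto_prod_tprod_nat
  refine tendsto_nhds_unique ?_ (tendsto_qExp_pow_mul hq hx)
  rw [mul_comm]
  exact (hP.mul_const _).congr fun n => (qExp_pow_mul hq hx n).symm

lemma qExp_ne_zero (hq : |q| < 1) (hx : |x| < 1) : qExp q x ≠ 0 :=
  left_ne_zero_of_mul_eq_one (qExp_mul_tprod_one_sub_mul_pow hq hx)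

lemma qExpMoment_div_qExp_q_mul (hq : |q| < 1) (hx : |x| < 1) :
    qExpMoment q (q * x) / qExp q (q * x) = qExpMoment q x / qExp q x - x / (1 - x) := by
  have hF := qExp_ne_zero hq hx
  have h1 : 1 - x ≠ 0 := (sub_pos.2 ((le_abs_self x).trans_lt hx)).ne'
  rw [qExpMoment_q_mul hq hx, qExp_q_mul hq hx]
  field_simp

lemma qExpMoment_div_qExp_pow_mul (hq : |q| < 1) (hx : |x| < 1) (n : ℕ) :
    qExpMoment q (q ^ n * x) / qExp q (q ^ n * x)
      = qExpMoment q x / qExp q x - ∑ i ∈ range n, x * q ^ i / (1 - x * q ^ i) := by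
  induction n with
  | zero => simp
  | succ n ih =>
    rw [pow_succ', mul_assoc, qExpMoment_div_qExp_q_mul hq ((abs_pow_mul_le hq.le n).trans_lt hx),
      ih, sum_range_succ, mul_comm (q ^ n) x]
    ring

lemma summable_mul_pow_div_one_sub_mul_pow (hq : |q| < 1) (hx : |x| < 1) :
    Summable fun i : ℕ => x * q ^ i / (1 - x * q ^ i) := by
  refine ((summable_geometric_of_abs_lt_one hq).abs.mul_left (|x| / (1 - |x|))).of_norm_bounded
    fun i => ?_
  have hxq : |x * q ^ i| ≤ |x| := by simpa only [mul_comm x] using abs_pow_mul_le hq.le i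
  have hden : 1 - |x| ≤ |1 - x * q ^ i| := by
    have := abs_sub_abs_le_abs_sub 1 (x * q ^ i)
    rw [abs_one] at this
    linarith
  rw [Real.norm_eq_abs, abs_div, div_mul_eq_mul_div, abs_mul x, abs_pow, ← abs_pow]
  exact div_le_div₀ (by positivity) (by rw [← abs_mul]) (by linarith) hden

theorem hasSum_mul_pow_div_one_sub_mul_pow (hq : |q| < 1) (hx : |x| < 1) :
    HasSum (fun i : ℕ => x * q ^ i / (1 - x * q ^ i)) (qExpMoment q x / qExp q x) := by
  refine (summable_mul_pow_div_one_sub_mul_pow hq hx).hasSum_iff_tendsto_nat.2 ?_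
  have hlim := tendsto_const_nhds (x := qExpMoment q x / qExp q x) |>.sub
    ((tendsto_qExpMoment_pow_mul hq hx).div (tendsto_qExp_pow_mul hq hx) one_ne_zero)
  rw [zero_div, sub_zero] at hlim
  refine hlim.congr fun n => ?_
  rw [Pi.div_apply, qExpMoment_div_qExp_pow_mul hq hx]
  ring

end

/-- For `q ∈ (0,1)` and `α ∈ (0,1)`, the mean of the q-geometric
distribution with parameter `α` equals `α Σ q^k/(1 − α q^k)`, and the particle
density `ρ = 1/(1 + E(gap))` equals
`log q / (log q + log(1−q) + Ψ_q(log α/log q))`, where `Ψ_q` is the q-digamma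
function given by its series. -/
theorem stmt_6 (q α : ℝ) (hq : q ∈ Set.Ioo (0 : ℝ) 1) (hα : α ∈ Set.Ioo (0 : ℝ) 1) :
    let w : ℕ → ℝ := fun k =>
      (∏' j : ℕ, (1 - α * q ^ j)) * α ^ k / ∏ i ∈ Finset.range k, (1 - q ^ (i + 1))
    let Ψ : ℝ → ℝ := fun z =>
      -Real.log (1 - q) + Real.log q * ∑' k : ℕ, q ^ (z + (k : ℝ)) / (1 - q ^ (z + (k : ℝ)))
    (∑' k : ℕ, (k : ℝ) * w k) = α * ∑' k : ℕ, q ^ k / (1 - α * q ^ k) ∧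
    1 / (1 + ∑' k : ℕ, (k : ℝ) * w k)
      = Real.log q /
        (Real.log q + Real.log (1 - q) + Ψ (Real.log α / Real.log q)) := by
  obtain ⟨hq0, hq1⟩ := hq
  obtain ⟨hα0, hα1⟩ := hα
  have hq' : |q| < 1 := abs_lt.2 ⟨by linarith, hq1⟩
  have hα' : |α| < 1 := abs_lt.2 ⟨by linarith, hα1⟩
  intro w Ψ
  set S := ∑' i : ℕ, α * q ^ i / (1 - α * q ^ i)
  have hmean : ∑' k : ℕ, (k : ℝ) * w k = S := by
    calc ∑' k : ℕ, (k : ℝ) * w k = (∏' j : ℕ, (1 - α * q ^ j)) * qExpMoment q α := by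
          rw [qExpMoment, ← tsum_mul_left]
          congr with k
          simp only [w, qExpTerm, qPochhammer_self]
          ring
      _ = qExpMoment q α / qExp q α := by
          rw [eq_div_iff (qExp_ne_zero hq' hα'), mul_right_comm, mul_comm _ (qExp q α),
            qExp_mul_tprod_one_sub_mul_pow hq' hα', one_mul]
      _ = S := (hasSum_mul_pow_div_one_sub_mul_pow hq' hα').tsum_eq.symm
  have hlog : Real.log q < 0 := Real.log_neg hq0 hq1
  have hΨ : Ψ (Real.log α / Real.log q) = -Real.log (1 - q) + Real.log q * S := by
    have hpow (k : ℕ) : q ^ (Real.log α / Real.log q + k) = α * q ^ k := by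
      rw [Real.rpow_add hq0, Real.rpow_natCast, Real.rpow_def_of_pos hq0,
        mul_div_cancel₀ _ hlog.ne, Real.exp_log hα0]
    simp only [Ψ, hpow, S]
  refine ⟨by rw [hmean, ← tsum_mul_left]; exact tsum_congr fun i => mul_div_assoc _ _ _, ?_⟩
  rw [hmean, hΨ, show Real.log q + Real.log (1 - q) + (-Real.log (1 - q) + Real.log q * S)
    = Real.log q * (1 + S) by ring, div_mul_cancel_left₀ hlog.ne, one_div]
end

section
/- Let q ∈ (0,1). The functions θ ↦ (f(θ) − 1)/κ(θ) and θ ↦ 1/κ(θ) are differentiable on (0,∞), and for every θ > 0 one has the identity d/dθ[(f(θ) − 1)/κ(θ)] = −(q^θ κ(θ) − f(θ) + 1) · d/dθ[1/κ(θ)]. -/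
/-!
Write `u = q ^ (θ + k)`. The `k`-th terms of `κ` and `f` are `q ^ k / (1 - u) ^ 2` and
`u ^ 2 / (1 - u) ^ 2`, whose `θ`-derivatives are `2 log q · q ^ k u / (1 - u) ^ 3` and
`2 log q · u ^ 2 / (1 - u) ^ 3`; since `u = q ^ θ q ^ k`, the second is `q ^ θ` times the first.
Both series of derivatives are dominated by a geometric series locally uniformly on `(0, ∞)`,
so `f' = q ^ θ κ'`, and the identity is the quotient rule applied to `(f - 1) / κ` and `1 / κ`.
-/

open Real Set

lemma deriv_sub_one_div_eq_of_hasDerivAt_mul {F K : ℝ → ℝ} {c d θ : ℝ}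
    (hF : HasDerivAt F (c * d) θ) (hK : HasDerivAt K d θ) (hK0 : K θ ≠ 0) :
    deriv (fun u => (F u - 1) / K u) θ = -(c * K θ - F θ + 1) * deriv (fun u => 1 / K u) θ := by
  have hquot : HasDerivAt (fun u => (F u - 1) / K u) ((c * d * K θ - (F θ - 1) * d) / K θ ^ 2) θ :=
    (hF.sub_const 1).div hK hK0
  have hinv : HasDerivAt (fun u => 1 / K u) ((0 * K θ - 1 * d) / K θ ^ 2) θ :=
    (hasDerivAt_const θ 1).div hK hK0
  rw [hquot.deriv, hinv.deriv]
  field_simp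
  ring

namespace QKappa

variable {q : ℝ}

noncomputable def kappaTerm (q : ℝ) (k : ℕ) (θ : ℝ) : ℝ :=
  q ^ k / (1 - q ^ (θ + k)) ^ 2

noncomputable def fTerm (q : ℝ) (k : ℕ) (θ : ℝ) : ℝ :=
  q ^ (2 * θ + 2 * (k : ℝ)) / (1 - q ^ (θ + k)) ^ 2

noncomputable def kappaTermDeriv (q : ℝ) (k : ℕ) (θ : ℝ) : ℝ :=
  2 * log q * q ^ k * q ^ (θ + k) / (1 - q ^ (θ + k)) ^ 3

lemma one_sub_rpow_pos (hq0 : 0 < q) (hq1 : q < 1) {a : ℝ} (ha : 0 < a) : 0 < 1 - q ^ a :=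
  sub_pos.mpr (rpow_lt_one hq0.le hq1 ha)

lemma one_sub_rpow_add_natCast_pos (hq0 : 0 < q) (hq1 : q < 1) {θ : ℝ} (hθ : 0 < θ) (k : ℕ) :
    0 < 1 - q ^ (θ + k) :=
  one_sub_rpow_pos hq0 hq1 (by positivity)

lemma rpow_add_natCast_le (hq0 : 0 < q) (hq1 : q < 1) {ε θ : ℝ} (h : ε ≤ θ) (k : ℕ) :
    q ^ (θ + k) ≤ q ^ ε :=
  rpow_le_rpow_of_exponent_ge hq0 hq1.le (by linarith [k.cast_nonneg (α := ℝ)])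

lemma rpow_mul_pow_eq_rpow_add (hq0 : 0 < q) (θ : ℝ) (k : ℕ) :
    q ^ θ * q ^ k = q ^ (θ + k) := by
  rw [rpow_add hq0, rpow_natCast]

lemma rpow_two_mul_add_two_mul (hq0 : 0 < q) (θ : ℝ) (k : ℕ) :
    q ^ (2 * θ + 2 * (k : ℝ)) = (q ^ (θ + k)) ^ 2 := by
  rw [← rpow_natCast, ← rpow_mul hq0.le]
  push_cast
  ring_nf

lemma kappaTerm_pos (hq0 : 0 < q) (hq1 : q < 1) {θ : ℝ} (hθ : 0 < θ) (k : ℕ) :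
    0 < kappaTerm q k θ :=
  have := one_sub_rpow_add_natCast_pos hq0 hq1 hθ k
  div_pos (pow_pos hq0 k) (by positivity)

lemma fTerm_le_kappaTerm (hq0 : 0 < q) (hq1 : q < 1) {θ : ℝ} (hθ : 0 < θ) (k : ℕ) :
    fTerm q k θ ≤ kappaTerm q k θ := by
  have hu : q ^ (θ + k) ≤ q ^ k := by
    rw [← rpow_natCast]
    exact rpow_le_rpow_of_exponent_ge hq0 hq1.le (by linarith)
  have := one_sub_rpow_add_natCast_pos hq0 hq1 hθ k
  unfold fTerm kappaTerm
  rw [rpow_two_mul_add_two_mul hq0]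
  gcongr
  calc (q ^ (θ + k)) ^ 2 ≤ q ^ (θ + k) :=
        pow_le_of_le_one (rpow_pos_of_pos hq0 _).le (rpow_le_one hq0.le hq1.le (by positivity))
          two_ne_zero
    _ ≤ q ^ k := hu

lemma summable_kappaTerm (hq0 : 0 < q) (hq1 : q < 1) {θ : ℝ} (hθ : 0 < θ) :
    Summable fun k => kappaTerm q k θ := by
  refine .of_nonneg_of_le (fun k => (kappaTerm_pos hq0 hq1 hθ k).le) (fun k => ?_)
    ((summable_geometric_of_lt_one hq0.le hq1).mul_left (1 / (1 - q ^ θ) ^ 2))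
  have := one_sub_rpow_pos hq0 hq1 hθ
  have := rpow_add_natCast_le hq0 hq1 (le_refl θ) k
  calc kappaTerm q k θ ≤ q ^ k / (1 - q ^ θ) ^ 2 := by unfold kappaTerm; gcongr
    _ = 1 / (1 - q ^ θ) ^ 2 * q ^ k := by ring

lemma summable_fTerm (hq0 : 0 < q) (hq1 : q < 1) {θ : ℝ} (hθ : 0 < θ) :
    Summable fun k => fTerm q k θ := by
  refine .of_nonneg_of_le (fun k => ?_) (fTerm_le_kappaTerm hq0 hq1 hθ)
    (summable_kappaTerm hq0 hq1 hθ)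
  unfold fTerm
  positivity

lemma hasDerivAt_rpow_add_natCast (hq0 : 0 < q) (k : ℕ) (θ : ℝ) :
    HasDerivAt (fun t : ℝ => q ^ (t + k)) (q ^ (θ + k) * log q) θ :=
  (hasStrictDerivAt_const_rpow hq0 (θ + k)).hasDerivAt.comp_add_const θ k

lemma hasDerivAt_kappaTerm (hq0 : 0 < q) (hq1 : q < 1) (k : ℕ) {θ : ℝ} (hθ : 0 < θ) :
    HasDerivAt (kappaTerm q k) (kappaTermDeriv q k θ) θ := by
  have hne := (one_sub_rpow_add_natCast_pos hq0 hq1 hθ k).ne'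
  refine ((hasDerivAt_const θ (q ^ k)).div
    (((hasDerivAt_rpow_add_natCast hq0 k θ).const_sub 1).fun_pow 2) (pow_ne_zero 2 hne)).congr_deriv ?_
  rw [kappaTermDeriv]
  field_simp
  ring

lemma hasDerivAt_fTerm (hq0 : 0 < q) (hq1 : q < 1) (k : ℕ) {θ : ℝ} (hθ : 0 < θ) :
    HasDerivAt (fTerm q k) (q ^ θ * kappaTermDeriv q k θ) θ := by
  have hne := (one_sub_rpow_add_natCast_pos hq0 hq1 hθ k).ne'
  have hu := hasDerivAt_rpow_add_natCast hq0 k θ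
  have hfTerm : fTerm q k = fun t : ℝ => (q ^ (t + k)) ^ 2 / (1 - q ^ (t + k)) ^ 2 := by
    funext t
    rw [fTerm, rpow_two_mul_add_two_mul hq0]
  rw [hfTerm]
  have hderiv : q ^ θ * kappaTermDeriv q k θ
      = 2 * log q * (q ^ (θ + k)) ^ 2 / (1 - q ^ (θ + k)) ^ 3 := by
    rw [kappaTermDeriv, ← rpow_mul_pow_eq_rpow_add hq0]
    ring
  refine ((hu.fun_pow 2).div ((hu.const_sub 1).fun_pow 2) (pow_ne_zero 2 hne)).congr_deriv ?_
  rw [hderiv]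
  field_simp
  ring

lemma norm_kappaTermDeriv_le (hq0 : 0 < q) (hq1 : q < 1) {ε θ : ℝ} (hε : 0 < ε) (hθ : ε < θ)
    (k : ℕ) : ‖kappaTermDeriv q k θ‖ ≤ 2 * |log q| / (1 - q ^ ε) ^ 3 * q ^ k := by
  have hu0 : 0 < q ^ (θ + k) := rpow_pos_of_pos hq0 _
  have huε := rpow_add_natCast_le hq0 hq1 hθ.le k
  have := one_sub_rpow_pos hq0 hq1 hε
  have hu1 := one_sub_rpow_add_natCast_pos hq0 hq1 (hε.trans hθ) k
  rw [norm_eq_abs, kappaTermDeriv, abs_div, abs_mul, abs_mul, abs_mul, abs_two, abs_of_pos hu0,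
    abs_of_pos (pow_pos hq0 k), abs_of_pos (pow_pos hu1 3)]
  calc 2 * |log q| * q ^ k * q ^ (θ + k) / (1 - q ^ (θ + k)) ^ 3
      ≤ 2 * |log q| * q ^ k * 1 / (1 - q ^ ε) ^ 3 := by gcongr; linarith
    _ = 2 * |log q| / (1 - q ^ ε) ^ 3 * q ^ k := by ring

lemma norm_rpow_mul_kappaTermDeriv_le (hq0 : 0 < q) (hq1 : q < 1) {ε θ : ℝ} (hε : 0 < ε)
    (hθ : ε < θ) (k : ℕ) :
    ‖q ^ θ * kappaTermDeriv q k θ‖ ≤ 2 * |log q| / (1 - q ^ ε) ^ 3 * q ^ k := by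
  rw [norm_mul, norm_eq_abs (q ^ θ), abs_of_pos (rpow_pos_of_pos hq0 θ)]
  calc q ^ θ * ‖kappaTermDeriv q k θ‖ ≤ ‖kappaTermDeriv q k θ‖ :=
        mul_le_of_le_one_left (norm_nonneg _) (rpow_le_one hq0.le hq1.le (hε.trans hθ).le)
    _ ≤ _ := norm_kappaTermDeriv_le hq0 hq1 hε hθ k

lemma hasDerivAt_tsum_kappaTerm (hq0 : 0 < q) (hq1 : q < 1) {θ : ℝ} (hθ : 0 < θ) :
    HasDerivAt (fun t => ∑' k, kappaTerm q k t) (∑' k, kappaTermDeriv q k θ) θ := by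
  have hε : 0 < θ / 2 := half_pos hθ
  have hmem : θ ∈ Ioi (θ / 2) := half_lt_self hθ
  exact hasDerivAt_tsum_of_isPreconnected
    ((summable_geometric_of_lt_one hq0.le hq1).mul_left _) isOpen_Ioi isPreconnected_Ioi
    (fun k _ hy => hasDerivAt_kappaTerm hq0 hq1 k (hε.trans hy))
    (fun k _ hy => norm_kappaTermDeriv_le hq0 hq1 hε hy k)
    hmem (summable_kappaTerm hq0 hq1 hθ) hmem

lemma hasDerivAt_tsum_fTerm (hq0 : 0 < q) (hq1 : q < 1) {θ : ℝ} (hθ : 0 < θ) :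
    HasDerivAt (fun t => ∑' k, fTerm q k t) (q ^ θ * ∑' k, kappaTermDeriv q k θ) θ := by
  have hε : 0 < θ / 2 := half_pos hθ
  have hmem : θ ∈ Ioi (θ / 2) := half_lt_self hθ
  rw [← tsum_mul_left]
  exact hasDerivAt_tsum_of_isPreconnected
    ((summable_geometric_of_lt_one hq0.le hq1).mul_left _) isOpen_Ioi isPreconnected_Ioi
    (fun k _ hy => hasDerivAt_fTerm hq0 hq1 k (hε.trans hy))
    (fun k _ hy => norm_rpow_mul_kappaTermDeriv_le hq0 hq1 hε hy k)
    hmem (summable_fTerm hq0 hq1 hθ) hmem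

lemma tsum_kappaTerm_pos (hq0 : 0 < q) (hq1 : q < 1) {θ : ℝ} (hθ : 0 < θ) :
    0 < ∑' k, kappaTerm q k θ :=
  (summable_kappaTerm hq0 hq1 hθ).tsum_pos (fun k => (kappaTerm_pos hq0 hq1 hθ k).le) 0
    (kappaTerm_pos hq0 hq1 hθ 0)

end QKappa

open QKappa in
/-- For `q ∈ (0,1)`, the functions `θ ↦ (f(θ)−1)/κ(θ)` and
`θ ↦ 1/κ(θ)` are differentiable on `(0,∞)` and for every `θ > 0`,
`d/dθ[(f−1)/κ] = −(q^θ κ(θ) − f(θ) + 1) · d/dθ[1/κ]`. -/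
theorem stmt_7 (q : ℝ) (hq : q ∈ Set.Ioo (0 : ℝ) 1) :
    let κ : ℝ → ℝ := fun θ => ∑' k : ℕ, q ^ (k : ℕ) / (1 - q ^ (θ + (k : ℝ))) ^ 2
    let f : ℝ → ℝ := fun θ => ∑' k : ℕ, q ^ (2 * θ + 2 * (k : ℝ)) / (1 - q ^ (θ + (k : ℝ))) ^ 2
    DifferentiableOn ℝ (fun θ => (f θ - 1) / κ θ) (Set.Ioi 0) ∧
    DifferentiableOn ℝ (fun θ => 1 / κ θ) (Set.Ioi 0) ∧
    ∀ θ : ℝ, 0 < θ →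
      deriv (fun u => (f u - 1) / κ u) θ
        = -(q ^ θ * κ θ - f θ + 1) * deriv (fun u => 1 / κ u) θ := by
  obtain ⟨hq0, hq1⟩ := hq
  intro κ f
  have hκ : ∀ θ : ℝ, 0 < θ → HasDerivAt κ (∑' k, kappaTermDeriv q k θ) θ :=
    fun θ hθ => hasDerivAt_tsum_kappaTerm hq0 hq1 hθ
  have hf : ∀ θ : ℝ, 0 < θ → HasDerivAt f (q ^ θ * ∑' k, kappaTermDeriv q k θ) θ :=
    fun θ hθ => hasDerivAt_tsum_fTerm hq0 hq1 hθ
  have hκ0 : ∀ θ : ℝ, 0 < θ → κ θ ≠ 0 := fun θ hθ => (tsum_kappaTerm_pos hq0 hq1 hθ).ne'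
  refine ⟨fun θ hθ => ?_, fun θ hθ => ?_, fun θ hθ => ?_⟩
  · exact (((hf θ hθ).sub_const 1).div (hκ θ hθ) (hκ0 θ hθ)).differentiableAt.differentiableWithinAt
  · exact ((hasDerivAt_const θ 1).div (hκ θ hθ) (hκ0 θ hθ)).differentiableAt.differentiableWithinAt
  · exact deriv_sub_one_div_eq_of_hasDerivAt_mul (hf θ hθ) (hκ θ hθ) (hκ0 θ hθ)
end

section
/- Let q ∈ (0,1). Suppose Θ : (−(1−q), 1) → (0,∞) is differentiable and satisfies (f(Θ(v)) − 1)/κ(Θ(v)) = v for every v ∈ (−(1−q), 1). For t > 0 and y ∈ ℝ with y/t ∈ (−(1−q), 1), define the density ρ(t,y) = log q / (log q + log(1−q) + Ψ_q(Θ(y/t))) and the current j(t,y) = q^{Θ(y/t)} · ρ(t,y). Then at every such point (t,y) the partial derivatives ∂ρ/∂t and ∂j/∂y exist and satisfy the conservation law ∂ρ/∂t(t,y) + ∂j/∂y(t,y) = 0. -/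
/-!
Since `log q + log (1 - q) + Ψ_q(θ) = log q · (1 + L(θ))` with `L(θ) = ∑ₖ q^(θ+k)/(1 - q^(θ+k))`,
the fields are self-similar: `ρ(t, y) = R(y/t)` and `j(t, y) = J(y/t)` with `R = (1 + L ∘ Θ)⁻¹` and
`J = q^Θ R`, and the conservation law becomes `J'(v) = v R'(v)`. Differentiating termwise,
`L' = log q · T` with `T(θ) = ∑ₖ q^(θ+k)/(1 - q^(θ+k))² = q^θ κ(θ)`, and `x/(1-x) = x/(1-x)² - x²/(1-x)²`
gives `L = T - f`. Then `J' - v R'` is proportional to `q^θ (1 + L) - (q^θ - v) T = q^θ (v κ - (f - 1))`,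
which vanishes by the equation defining `Θ`.
-/

open Real

lemma exists_hasDerivAt_comp_div_add_eq_zero {R J : ℝ → ℝ} {R' t y : ℝ} (ht : t ≠ 0)
    (hR : HasDerivAt R R' (y / t)) (hJ : HasDerivAt J (y / t * R') (y / t)) :
    ∃ ρt jy : ℝ, HasDerivAt (fun s => R (y / s)) ρt t ∧
      HasDerivAt (fun x => J (x / t)) jy y ∧ ρt + jy = 0 := by
  have hρ : HasDerivAt (fun s => R (y / s)) (R' * (y * -(t ^ 2)⁻¹)) t :=
    hR.comp t ((hasDerivAt_inv ht).const_mul y)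
  have hj : HasDerivAt (fun x => J (x / t)) (y / t * R' * (1 / t)) y :=
    hJ.comp y ((hasDerivAt_id y).div_const t)
  refine ⟨_, _, hρ, hj, ?_⟩
  field_simp
  ring

lemma exists_hasDerivAt_inv_comp_and_rpow_mul {c : ℝ} (hc : 0 < c) {S Θ : ℝ → ℝ} {S' D v : ℝ}
    (hS : HasDerivAt S S' (Θ v)) (hS0 : S (Θ v) ≠ 0) (hΘ : HasDerivAt Θ D v)
    (hkey : c ^ Θ v * log c * S (Θ v) = (c ^ Θ v - v) * S') :
    ∃ R', HasDerivAt (fun w => (S (Θ w))⁻¹) R' v ∧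
      HasDerivAt (fun w => c ^ Θ w * (S (Θ w))⁻¹) (v * R') v := by
  have hR := (hS.inv hS0).comp v hΘ
  refine ⟨_, hR, ((hΘ.const_rpow hc).mul hR).congr_deriv ?_⟩
  simp only [Function.comp_apply, Pi.inv_apply]
  field_simp
  linear_combination D * hkey

lemma hasDerivAt_rpow_add_div_one_sub {q : ℝ} (hq : 0 < q) {x c : ℝ} (hx : q ^ (x + c) ≠ 1) :
    HasDerivAt (fun w => q ^ (w + c) / (1 - q ^ (w + c)))
      (log q * (q ^ (x + c) / (1 - q ^ (x + c)) ^ 2)) x := by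
  have h := ((hasDerivAt_id x).add_const c).const_rpow hq
  refine (h.div ((hasDerivAt_const x 1).sub h) (sub_ne_zero.2 hx.symm)).congr_deriv ?_
  simp only [id, Pi.sub_apply]
  field_simp
  ring

namespace QSeries

/-- `Ψ_q(z) = -log (1 - q) + log q * lambert q z`. -/
noncomputable def lambert (q θ : ℝ) : ℝ := ∑' k : ℕ, q ^ (θ + k) / (1 - q ^ (θ + k))

noncomputable def lambertSq (q θ : ℝ) : ℝ := ∑' k : ℕ, q ^ (θ + k) / (1 - q ^ (θ + k)) ^ 2

noncomputable def kappa (q θ : ℝ) : ℝ := ∑' k : ℕ, q ^ k / (1 - q ^ (θ + k)) ^ 2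

noncomputable def fSeries (q θ : ℝ) : ℝ :=
  ∑' k : ℕ, q ^ (2 * θ + 2 * k) / (1 - q ^ (θ + k)) ^ 2

variable {q θ : ℝ}

lemma rpow_mem_Ioo (hq : q ∈ Set.Ioo (0 : ℝ) 1) {x : ℝ} (hx : 0 < x) :
    q ^ x ∈ Set.Ioo (0 : ℝ) 1 :=
  ⟨rpow_pos_of_pos hq.1 x, rpow_lt_one hq.1.le hq.2 hx⟩

lemma rpow_two_mul_add (hq : 0 ≤ q) (θ x : ℝ) : q ^ (2 * θ + 2 * x) = (q ^ (θ + x)) ^ 2 := by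
  rw [← mul_add, mul_comm, rpow_mul hq, rpow_two]

lemma rpow_add_div_sq_le (hq : q ∈ Set.Ioo (0 : ℝ) 1) {a x : ℝ} (ha : 0 < a) (hax : a ≤ x)
    (k : ℕ) : q ^ (x + k) / (1 - q ^ (x + k)) ^ 2 ≤ q ^ a / (1 - q ^ a) ^ 2 * q ^ k := by
  have hk : (0 : ℝ) ≤ k := k.cast_nonneg
  have hnum : q ^ (x + k) ≤ q ^ a * q ^ k := by
    rw [← rpow_natCast, ← rpow_add hq.1]
    exact rpow_le_rpow_of_exponent_ge hq.1 hq.2.le (by linarith)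
  have hden : q ^ (x + k) ≤ q ^ a := rpow_le_rpow_of_exponent_ge hq.1 hq.2.le (by linarith)
  have ha1 : 0 < 1 - q ^ a := sub_pos.2 (rpow_mem_Ioo hq ha).2
  rw [div_mul_eq_mul_div]
  gcongr
  exact (mul_pos (rpow_pos_of_pos hq.1 a) (pow_pos hq.1 k)).le

lemma lambertSq_term_eq (hq : 0 < q) (θ : ℝ) (k : ℕ) :
    q ^ (θ + k) / (1 - q ^ (θ + k)) ^ 2 = q ^ θ * (q ^ k / (1 - q ^ (θ + k)) ^ 2) := by
  rw [rpow_add hq, rpow_natCast, mul_div_assoc]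

lemma lambertSq_eq_rpow_mul_kappa (hq : 0 < q) (θ : ℝ) : lambertSq q θ = q ^ θ * kappa q θ := by
  simp only [lambertSq, kappa, lambertSq_term_eq hq, tsum_mul_left]

section Summable

variable (hq : q ∈ Set.Ioo (0 : ℝ) 1) (hθ : 0 < θ)
include hq hθ

lemma summable_lambertSq : Summable fun k : ℕ => q ^ (θ + k) / (1 - q ^ (θ + k)) ^ 2 :=
  .of_nonneg_of_le (fun _ => div_nonneg (rpow_nonneg hq.1.le _) (sq_nonneg _))
    (rpow_add_div_sq_le hq hθ le_rfl) ((summable_geometric_of_lt_one hq.1.le hq.2).mul_left _)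

lemma summable_kappa : Summable fun k : ℕ => q ^ k / (1 - q ^ (θ + k)) ^ 2 :=
  (summable_mul_left_iff (rpow_pos_of_pos hq.1 θ).ne').1 <| by
    simpa only [lambertSq_term_eq hq.1] using summable_lambertSq hq hθ

lemma summable_lambert : Summable fun k : ℕ => q ^ (θ + k) / (1 - q ^ (θ + k)) := by
  have hu (k : ℕ) := rpow_mem_Ioo hq (x := θ + k) (by positivity)
  have h1u (k : ℕ) : 0 < 1 - q ^ (θ + k) := sub_pos.2 (hu k).2
  refine .of_nonneg_of_le (fun k => div_nonneg (hu k).1.le (h1u k).le) (fun k => ?_)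
    (summable_lambertSq hq hθ)
  exact div_le_div_of_nonneg_left (hu k).1.le (pow_pos (h1u k) 2)
    (sq_le (h1u k).le (by linarith [(hu k).1]))

lemma summable_fSeries : Summable fun k : ℕ => q ^ (2 * θ + 2 * k) / (1 - q ^ (θ + k)) ^ 2 := by
  have hq0 := hq.1
  refine .of_nonneg_of_le (fun k => by positivity) (fun k => ?_) (summable_lambertSq hq hθ)
  have hu := rpow_mem_Ioo hq (x := θ + k) (by positivity)
  rw [rpow_two_mul_add hq0.le, sq (q ^ (θ + k)), mul_div_assoc]
  exact mul_le_of_le_one_left (div_nonneg hu.1.le (sq_nonneg _)) hu.2.le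

lemma lambert_nonneg : 0 ≤ lambert q θ :=
  tsum_nonneg fun k => div_nonneg (rpow_nonneg hq.1.le _)
    (sub_nonneg.2 (rpow_mem_Ioo hq (x := θ + k) (by positivity)).2.le)

lemma kappa_pos : 0 < kappa q θ := by
  have hterm (k : ℕ) : 0 < q ^ k / (1 - q ^ (θ + k)) ^ 2 :=
    div_pos (pow_pos hq.1 k) (pow_pos (sub_pos.2 (rpow_mem_Ioo hq (by positivity)).2) 2)
  exact (summable_kappa hq hθ).tsum_pos (fun k => (hterm k).le) 0 (hterm 0)

lemma lambert_eq_lambertSq_sub_fSeries : lambert q θ = lambertSq q θ - fSeries q θ := by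
  rw [lambertSq, fSeries, ← (summable_lambertSq hq hθ).tsum_sub (summable_fSeries hq hθ)]
  refine tsum_congr fun k => ?_
  have hu := (rpow_mem_Ioo hq (x := θ + k) (by positivity)).2
  rw [rpow_two_mul_add hq.1.le]
  field_simp [sub_ne_zero.2 hu.ne']

lemma hasDerivAt_lambert : HasDerivAt (lambert q) (log q * lambertSq q θ) θ := by
  have hθ2 : 0 < θ / 2 := half_pos hθ
  have key := hasDerivAt_tsum_of_isPreconnected
    (g := fun (k : ℕ) (x : ℝ) => q ^ (x + k) / (1 - q ^ (x + k)))
    (g' := fun (k : ℕ) (x : ℝ) => log q * (q ^ (x + k) / (1 - q ^ (x + k)) ^ 2))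
    (u := fun k : ℕ => |log q| * (q ^ (θ / 2) / (1 - q ^ (θ / 2)) ^ 2 * q ^ k))
    (((summable_geometric_of_lt_one hq.1.le hq.2).mul_left _).mul_left _)
    isOpen_Ioi isPreconnected_Ioi (fun k x hx => ?_) (fun k x hx => ?_)
    (half_lt_self hθ) (summable_lambert hq hθ) (half_lt_self hθ)
  · rwa [tsum_mul_left] at key
  · have hx : 0 < x + k := by
      have : θ / 2 < x := hx
      linarith [k.cast_nonneg (α := ℝ)]
    exact hasDerivAt_rpow_add_div_one_sub hq.1 (rpow_mem_Ioo hq hx).2.ne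
  · have hq0 := hq.1
    rw [norm_mul, norm_eq_abs, norm_of_nonneg (by positivity)]
    exact mul_le_mul_of_nonneg_left (rpow_add_div_sq_le hq hθ2 (le_of_lt hx) k) (abs_nonneg _)

lemma rpow_mul_one_add_lambert {v : ℝ} (hv : (fSeries q θ - 1) / kappa q θ = v) :
    q ^ θ * (1 + lambert q θ) = (q ^ θ - v) * lambertSq q θ := by
  rw [div_eq_iff (kappa_pos hq hθ).ne'] at hv
  rw [lambert_eq_lambertSq_sub_fSeries hq hθ, lambertSq_eq_rpow_mul_kappa hq.1]
  linear_combination (-(q ^ θ)) * hv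

end Summable

end QSeries

open QSeries

/-- For `q ∈ (0,1)`, suppose `Θ : (−(1−q),1) → (0,∞)` is
differentiable with `(f(Θ(v)) − 1)/κ(Θ(v)) = v` on the interval. Define the
density `ρ(t,y) = log q/(log q + log(1−q) + Ψ_q(Θ(y/t)))` and the current
`j(t,y) = q^(Θ(y/t)) ρ(t,y)`. Then at every `(t,y)` with `t > 0` and
`y/t ∈ (−(1−q),1)` the partial derivatives `∂ρ/∂t` and `∂j/∂y` exist and
satisfy the conservation law `∂ρ/∂t + ∂j/∂y = 0`. -/
theorem stmt_8 (q : ℝ) (hq : q ∈ Set.Ioo (0 : ℝ) 1) (Θ : ℝ → ℝ)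
    (hΘpos : ∀ v ∈ Set.Ioo (-(1 - q)) (1 : ℝ), 0 < Θ v)
    (hΘdiff : ∀ v ∈ Set.Ioo (-(1 - q)) (1 : ℝ), DifferentiableAt ℝ Θ v)
    (hΘeq : ∀ v ∈ Set.Ioo (-(1 - q)) (1 : ℝ),
      ((∑' k : ℕ, q ^ (2 * Θ v + 2 * (k : ℝ)) / (1 - q ^ (Θ v + (k : ℝ))) ^ 2) - 1)
        / (∑' k : ℕ, q ^ (k : ℕ) / (1 - q ^ (Θ v + (k : ℝ))) ^ 2) = v) :
    let Ψ : ℝ → ℝ := fun z =>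
      -Real.log (1 - q) + Real.log q * ∑' k : ℕ, q ^ (z + (k : ℝ)) / (1 - q ^ (z + (k : ℝ)))
    let ρ : ℝ → ℝ → ℝ := fun t y =>
      Real.log q / (Real.log q + Real.log (1 - q) + Ψ (Θ (y / t)))
    let j : ℝ → ℝ → ℝ := fun t y => q ^ (Θ (y / t)) * ρ t y
    ∀ t : ℝ, 0 < t → ∀ y : ℝ, y / t ∈ Set.Ioo (-(1 - q)) (1 : ℝ) →
      ∃ ρt jy : ℝ,
        HasDerivAt (fun s => ρ s y) ρt t ∧
        HasDerivAt (fun x => j t x) jy y ∧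
        ρt + jy = 0 := by
  intro Ψ ρ j t ht y hv
  have hρ (s x : ℝ) : ρ s x = (1 + lambert q (Θ (x / s)))⁻¹ := by
    change log q / (log q + log (1 - q) + (-log (1 - q) + log q * lambert q (Θ (x / s)))) = _
    rw [show log q + log (1 - q) + (-log (1 - q) + log q * lambert q (Θ (x / s)))
      = log q * (1 + lambert q (Θ (x / s))) by ring, div_mul_cancel_left₀ (log_neg hq.1 hq.2).ne]
  have hθ := hΘpos _ hv
  obtain ⟨R', hR, hJ⟩ := exists_hasDerivAt_inv_comp_and_rpow_mul hq.1
    ((hasDerivAt_lambert hq hθ).const_add 1)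
    (add_pos_of_pos_of_nonneg one_pos (lambert_nonneg hq hθ)).ne'
    (hΘdiff _ hv).hasDerivAt
    (by linear_combination log q * rpow_mul_one_add_lambert hq hθ (hΘeq _ hv))
  obtain ⟨ρt, jy, hρt, hjy, hsum⟩ := exists_hasDerivAt_comp_div_add_eq_zero ht.ne' hR hJ
  exact ⟨ρt, jy, by simpa only [hρ] using hρt, by simpa only [j, hρ] using hjy, hsum⟩
end

section
/- Let q ∈ (0,1) and for t ∈ ℝ, t ≠ 0, define f_t : ℝ → ℝ by f_t(y) = 1/(−q^{yt};q)_∞ = ∏_{k=0}^∞ (1 + q^{yt+k})^{−1}. Then: (1) for every t > 0 the function f_t is strictly increasing on ℝ, and for every t < 0 it is strictly decreasing; (2) for every δ > 0, sup_{y ∈ ℝ, |y| ≥ δ} |f_t(y) − 𝟙(y > 0)| → 0 as t → +∞, i.e. f_t converges uniformly on ℝ \ [−δ, δ] to the indicator function of (0,∞). -/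
/-!
Since `∏ (1 + aₖ)⁻¹ = exp (-∑ log (1 + aₖ))` and `0 ≤ log (1 + a) ≤ a`, a product
`∏ (1 + aₖ)⁻¹` over a nonnegative summable sequence lies between `1 - ∑ aₖ` and
`(1 + aⱼ)⁻¹` for every `j`, and strictly decreases when one `aⱼ` grows. With `aₖ = q^(x+k)`,
`f(x) = 1/(-q^x;q)_∞` satisfies `|f(x) - 1| ≤ q^x / (1 - q)` for `x > 0` and `f(x) ≤ q^(-x)`
for `x ≤ 0`, so `f_t(y) = f(yt)` is within `q^(δt) / (1 - q)` of the step function when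
`|y| ≥ δ`.
-/

open Real Filter

section InvOneAdd

variable {ι : Type*} {a b : ι → ℝ}

theorem tprod_inv_one_add_eq_exp (ha : ∀ i, 0 ≤ a i) (hs : Summable a) :
    ∏' i, (1 + a i)⁻¹ = exp (-∑' i, log (1 + a i)) := by
  have hpos : ∀ i, 0 < (1 + a i)⁻¹ := fun i => inv_pos.mpr (by linarith [ha i])
  have hlog : Summable fun i => log (1 + a i)⁻¹ := by
    simpa only [log_inv] using (summable_log_one_add_of_summable hs).neg
  rw [← rexp_tsum_eq_tprod hpos hlog]
  simp only [log_inv, tsum_neg]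

theorem tsum_log_one_add_nonneg (ha : ∀ i, 0 ≤ a i) : 0 ≤ ∑' i, log (1 + a i) :=
  tsum_nonneg fun i => log_nonneg (by linarith [ha i])

theorem tprod_inv_one_add_le_one (ha : ∀ i, 0 ≤ a i) (hs : Summable a) :
    ∏' i, (1 + a i)⁻¹ ≤ 1 := by
  rw [tprod_inv_one_add_eq_exp ha hs, exp_le_one_iff, neg_nonpos]
  exact tsum_log_one_add_nonneg ha

theorem one_sub_tsum_le_tprod_inv_one_add (ha : ∀ i, 0 ≤ a i) (hs : Summable a) :
    1 - ∑' i, a i ≤ ∏' i, (1 + a i)⁻¹ := by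
  have hlog_le : ∑' i, log (1 + a i) ≤ ∑' i, a i :=
    (summable_log_one_add_of_summable hs).tsum_le_tsum
      (fun i => by linarith [log_le_sub_one_of_pos (x := 1 + a i) (by linarith [ha i])]) hs
  rw [tprod_inv_one_add_eq_exp ha hs]
  linarith [add_one_le_exp (-∑' i, log (1 + a i))]

theorem tprod_inv_one_add_le_inv_one_add (ha : ∀ i, 0 ≤ a i) (hs : Summable a) (j : ι) :
    ∏' i, (1 + a i)⁻¹ ≤ (1 + a j)⁻¹ := by
  have hj : 0 < 1 + a j := by linarith [ha j]
  have hle : log (1 + a j) ≤ ∑' i, log (1 + a i) :=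
    (summable_log_one_add_of_summable hs).le_tsum j
      fun i _ => log_nonneg (by linarith [ha i])
  rw [tprod_inv_one_add_eq_exp ha hs, ← exp_log (inv_pos.mpr hj), exp_le_exp, log_inv]
  linarith

theorem tprod_inv_one_add_lt_of_le_of_lt (ha : ∀ i, 0 ≤ a i) (hsa : Summable a)
    (hsb : Summable b) (hab : ∀ i, a i ≤ b i) {j : ι} (hj : a j < b j) :
    ∏' i, (1 + b i)⁻¹ < ∏' i, (1 + a i)⁻¹ := by
  have hb : ∀ i, 0 ≤ b i := fun i => (ha i).trans (hab i)
  have hlog : ∑' i, log (1 + a i) < ∑' i, log (1 + b i) :=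
    Summable.tsum_lt_tsum
      (fun i => log_le_log (by linarith [ha i]) (by linarith [hab i]))
      (log_lt_log (by linarith [ha j]) (by linarith))
      (summable_log_one_add_of_summable hsa) (summable_log_one_add_of_summable hsb)
  rw [tprod_inv_one_add_eq_exp ha hsa, tprod_inv_one_add_eq_exp hb hsb, exp_lt_exp]
  linarith

end InvOneAdd

section QPochhammer

variable {q : ℝ}

/-- `invQPochhammer q x = 1 / (-q^x; q)_∞`. -/
noncomputable def invQPochhammer (q x : ℝ) : ℝ := ∏' k : ℕ, (1 + q ^ (x + k))⁻¹

theorem rpow_add_natCast_eq (hq0 : 0 < q) (x : ℝ) (k : ℕ) : q ^ (x + k) = q ^ x * q ^ k := by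
  rw [rpow_add hq0, rpow_natCast]

theorem hasSum_rpow_add_natCast (hq0 : 0 < q) (hq1 : q < 1) (x : ℝ) :
    HasSum (fun k : ℕ => q ^ (x + k)) (q ^ x / (1 - q)) := by
  simp only [rpow_add_natCast_eq hq0, div_eq_mul_inv]
  exact (hasSum_geometric_of_lt_one hq0.le hq1).mul_left _

theorem invQPochhammer_strictMono (hq0 : 0 < q) (hq1 : q < 1) :
    StrictMono (invQPochhammer q) := by
  intro x y hxy
  have hlt : ∀ k : ℕ, q ^ (y + k) < q ^ (x + k) := fun k =>
    rpow_lt_rpow_of_exponent_gt hq0 hq1 (by linarith)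
  exact tprod_inv_one_add_lt_of_le_of_lt (fun k => (rpow_pos_of_pos hq0 _).le)
    (hasSum_rpow_add_natCast hq0 hq1 y).summable (hasSum_rpow_add_natCast hq0 hq1 x).summable
    (fun k => (hlt k).le) (hlt 0)

theorem abs_invQPochhammer_sub_one_le (hq0 : 0 < q) (hq1 : q < 1) (x : ℝ) :
    |invQPochhammer q x - 1| ≤ q ^ x / (1 - q) := by
  have ha : ∀ k : ℕ, 0 ≤ q ^ (x + k) := fun k => (rpow_pos_of_pos hq0 _).le
  have hs := hasSum_rpow_add_natCast hq0 hq1 x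
  have hlower := one_sub_tsum_le_tprod_inv_one_add ha hs.summable
  rw [hs.tsum_eq] at hlower
  unfold invQPochhammer
  rw [abs_sub_comm, abs_of_nonneg (sub_nonneg.mpr (tprod_inv_one_add_le_one ha hs.summable))]
  linarith

theorem invQPochhammer_le_rpow_neg (hq0 : 0 < q) (hq1 : q < 1) (x : ℝ) :
    invQPochhammer q x ≤ q ^ (-x) := by
  have hpos : 0 < q ^ x := rpow_pos_of_pos hq0 x
  calc invQPochhammer q x ≤ (1 + q ^ (x + (0 : ℕ)))⁻¹ :=
        tprod_inv_one_add_le_inv_one_add (fun k => (rpow_pos_of_pos hq0 _).le)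
          (hasSum_rpow_add_natCast hq0 hq1 x).summable 0
    _ ≤ (q ^ x)⁻¹ := by
        rw [Nat.cast_zero, add_zero]
        exact inv_anti₀ hpos (by linarith)
    _ = q ^ (-x) := (rpow_neg hq0.le x).symm

theorem abs_invQPochhammer_sub_step_le (hq0 : 0 < q) (hq1 : q < 1) (x : ℝ) :
    |invQPochhammer q x - if 0 < x then 1 else 0| ≤ q ^ |x| / (1 - q) := by
  split_ifs with hx
  · rw [abs_of_pos hx]
    exact abs_invQPochhammer_sub_one_le hq0 hq1 x
  · have hG : 0 ≤ invQPochhammer q x :=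
      tprod_nonneg fun k => (inv_pos.mpr (by linarith [rpow_pos_of_pos hq0 (x + k)])).le
    rw [sub_zero, abs_of_nonneg hG, abs_of_nonpos (not_lt.mp hx)]
    calc invQPochhammer q x ≤ q ^ (-x) := invQPochhammer_le_rpow_neg hq0 hq1 x
      _ ≤ q ^ (-x) / (1 - q) :=
        le_div_self (rpow_pos_of_pos hq0 _).le (by linarith) (by linarith)

end QPochhammer

/-- For `q ∈ (0,1)` and `t ≠ 0`, let
`f_t(y) = 1/(−q^(yt);q)_∞ = ∏_{k=0}^∞ (1 + q^(yt+k))⁻¹`. Then `f_t` is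
strictly increasing for `t > 0`, strictly decreasing for `t < 0`, and for
every `δ > 0`, `f_t → 𝟙(y>0)` uniformly on `{|y| ≥ δ}` as `t → +∞`. -/
theorem stmt_10 (q : ℝ) (hq : q ∈ Set.Ioo (0 : ℝ) 1) :
    let F : ℝ → ℝ → ℝ := fun t y => ∏' k : ℕ, (1 + q ^ (y * t + (k : ℝ)))⁻¹
    (∀ t : ℝ, 0 < t → StrictMono (F t)) ∧
    (∀ t : ℝ, t < 0 → StrictAnti (F t)) ∧
    ∀ δ : ℝ, 0 < δ →
      TendstoUniformlyOn F (fun y => if 0 < y then 1 else 0) Filter.atTop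
        {y : ℝ | δ ≤ |y|} := by
  obtain ⟨hq0, hq1⟩ := hq
  intro F
  have hF : ∀ t, F t = invQPochhammer q ∘ fun y => y * t := fun t => rfl
  have hmono := invQPochhammer_strictMono hq0 hq1
  refine ⟨fun t ht => ?_, fun t ht => ?_, fun δ hδ => ?_⟩
  · exact hF t ▸ hmono.comp (strictMono_mul_right_of_pos ht)
  · exact hF t ▸ hmono.comp_strictAnti (strictAnti_mul_right ht)
  rw [Metric.tendstoUniformlyOn_iff]
  intro ε hε
  have hbound : Tendsto (fun t : ℝ => q ^ (δ * t) / (1 - q)) atTop (nhds 0) := by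
    simpa using ((tendsto_rpow_atTop_of_base_lt_one q (by linarith) hq1).comp
      (tendsto_id.const_mul_atTop hδ)).div_const (1 - q)
  filter_upwards [hbound.eventually (gt_mem_nhds hε), eventually_gt_atTop 0] with t hεt ht y hy
  have hexp : q ^ |y * t| ≤ q ^ (δ * t) := by
    rw [abs_mul, abs_of_pos ht]
    exact rpow_le_rpow_of_exponent_ge hq0 hq1.le (mul_le_mul_of_nonneg_right hy ht.le)
  rw [dist_comm, Real.dist_eq]
  calc |invQPochhammer q (y * t) - if 0 < y then 1 else 0| ≤ q ^ |y * t| / (1 - q) := by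
        simpa only [mul_pos_iff_of_pos_right ht] using
          abs_invQPochhammer_sub_step_le hq0 hq1 (y * t)
    _ ≤ q ^ (δ * t) / (1 - q) := div_le_div_of_nonneg_right hexp (by linarith)
    _ < ε := hεt
end

section
/- Let (f_n)_{n≥1} be a sequence of functions ℝ → [0,1] such that each f_n is strictly decreasing with lim_{y→−∞} f_n(y) = 1 and lim_{y→+∞} f_n(y) = 0, and such that for every δ > 0, f_n converges uniformly on ℝ \ [−δ, δ] to the indicator 𝟙(y < 0). Let (X_n)_{n≥1} be real-valued random variables (each defined on some probability space) such that for every r ∈ ℝ, E[f_n(X_n − r)] → p(r) as n → ∞, where p : ℝ → [0,1] is a continuous probability distribution function (nondecreasing, continuous, with limits 0 at −∞ and 1 at +∞). Then for every r ∈ ℝ, P(X_n < r) → p(r); i.e., X_n converges weakly in distribution to a random variable X with P(X < r) = p(r). -/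
/-!
For `δ > 0`, since `0 ≤ f n ≤ 1` and `f n` is antitone,
`E[f n (X - (r - δ))] - f n δ ≤ P(X < r) ≤ E[f n (X - (r + δ))] + (1 - f n (-δ))`.
As `n → ∞` the two bounds tend to `p (r - δ)` and `p (r + δ)`, because `f n (±δ) → 𝟙(±δ < 0)`;
letting `δ → 0⁺`, continuity of `p` squeezes `P(X_n < r)` to `p r`.
-/

open MeasureTheory Filter Set Topology

theorem tendsto_of_squeeze_family {ι κ α : Type*} [TopologicalSpace α] [LinearOrder α]
    [OrderTopology α] {F : Filter ι} {G : Filter κ} [G.NeBot] {a : ι → α} {c : α}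
    {L U : κ → ι → α} {l u : κ → α}
    (hL : ∀ᶠ δ in G, Tendsto (L δ) F (𝓝 (l δ))) (hU : ∀ᶠ δ in G, Tendsto (U δ) F (𝓝 (u δ)))
    (hl : Tendsto l G (𝓝 c)) (hu : Tendsto u G (𝓝 c))
    (hLa : ∀ᶠ δ in G, ∀ᶠ n in F, L δ n ≤ a n) (haU : ∀ᶠ δ in G, ∀ᶠ n in F, a n ≤ U δ n) :
    Tendsto a F (𝓝 c) := by
  refine tendsto_order.2 ⟨fun b hb => ?_, fun b hb => ?_⟩
  · obtain ⟨δ, hlδ, hLδ, hLaδ⟩ := ((hl.eventually (lt_mem_nhds hb)).and (hL.and hLa)).exists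
    filter_upwards [hLδ.eventually (lt_mem_nhds hlδ), hLaδ] with n hbL hLn using hbL.trans_le hLn
  · obtain ⟨δ, huδ, hUδ, haUδ⟩ := ((hu.eventually (gt_mem_nhds hb)).and (hU.and haU)).exists
    filter_upwards [hUδ.eventually (gt_mem_nhds huδ), haUδ] with n hUb haUn using haUn.trans_lt hUb

section ShiftedIntegral

variable {μ : Measure ℝ} {g : ℝ → ℝ}

theorem integrable_comp_sub_of_antitone [IsFiniteMeasure μ] (hg01 : ∀ y, g y ∈ Icc 0 1)
    (hg : Antitone g) (s : ℝ) : Integrable (fun x => g (x - s)) μ := by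
  refine (integrable_const (1 : ℝ)).mono' ?_ (ae_of_all _ fun x => ?_)
  · exact (hg.measurable.comp (measurable_id.sub_const s)).aestronglyMeasurable
  · rw [Real.norm_eq_abs, abs_of_nonneg (hg01 _).1]
    exact (hg01 _).2

theorem integral_comp_sub_le_measure_Iio_add [IsProbabilityMeasure μ] (hg01 : ∀ y, g y ∈ Icc 0 1)
    (hg : Antitone g) (r δ : ℝ) :
    ∫ x, g (x - (r - δ)) ∂μ ≤ (μ (Iio r)).toReal + g δ := by
  have hpt : ∀ x, g (x - (r - δ)) ≤ (Iio r).indicator 1 x + g δ := by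
    intro x
    by_cases hx : x < r
    · rw [indicator_of_mem (mem_Iio.2 hx), Pi.one_apply]
      linarith [(hg01 (x - (r - δ))).2, (hg01 δ).1]
    · rw [indicator_of_notMem (notMem_Iio.2 (not_lt.1 hx)), zero_add]
      exact hg (by linarith [not_lt.1 hx])
  have hind : Integrable ((Iio r).indicator (1 : ℝ → ℝ)) μ :=
    (integrable_const 1).indicator measurableSet_Iio
  calc ∫ x, g (x - (r - δ)) ∂μ
      ≤ ∫ x, ((Iio r).indicator 1 x + g δ) ∂μ :=
        integral_mono (integrable_comp_sub_of_antitone hg01 hg _)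
          (hind.add (integrable_const _)) hpt
    _ = (μ (Iio r)).toReal + g δ := by
        rw [integral_add hind (integrable_const _), integral_indicator_one measurableSet_Iio,
          integral_const, probReal_univ, one_smul]
        rfl

theorem measure_Iio_le_integral_comp_sub_add [IsProbabilityMeasure μ] (hg01 : ∀ y, g y ∈ Icc 0 1)
    (hg : Antitone g) (r δ : ℝ) :
    (μ (Iio r)).toReal ≤ ∫ x, g (x - (r + δ)) ∂μ + (1 - g (-δ)) := by
  have hpt : ∀ x, (Iio r).indicator (fun _ => g (-δ)) x ≤ g (x - (r + δ)) := by
    intro x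
    by_cases hx : x < r
    · rw [indicator_of_mem (mem_Iio.2 hx)]
      exact hg (by linarith)
    · rw [indicator_of_notMem (notMem_Iio.2 (not_lt.1 hx))]
      exact (hg01 _).1
  have hle := integral_mono ((integrable_const _).indicator measurableSet_Iio)
    (integrable_comp_sub_of_antitone (μ := μ) hg01 hg (r + δ)) hpt
  rw [integral_indicator_const _ measurableSet_Iio, smul_eq_mul] at hle
  change μ.real (Iio r) ≤ _
  have hIio : μ.real (Iio r) ≤ 1 := measureReal_le_one
  nlinarith [(hg01 (-δ)).2]

end ShiftedIntegral

theorem stmt_11_general (f : ℕ → ℝ → ℝ) (p : ℝ → ℝ)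
    (hf01 : ∀ n y, f n y ∈ Set.Icc (0 : ℝ) 1)
    (hfanti : ∀ n, StrictAnti (f n))
    (hfunif : ∀ δ : ℝ, 0 < δ →
      TendstoUniformlyOn f (fun y => if y < 0 then 1 else 0) Filter.atTop
        {y : ℝ | δ ≤ |y|})
    (hpcont : Continuous p)
    (μ : ℕ → Measure ℝ) (hμ : ∀ n, IsProbabilityMeasure (μ n))
    (hconv : ∀ r : ℝ,
      Filter.Tendsto (fun n => ∫ x, f n (x - r) ∂(μ n)) Filter.atTop (nhds (p r))) :
    ∀ r : ℝ,
      Filter.Tendsto (fun n => ((μ n) (Set.Iio r)).toReal) Filter.atTop (nhds (p r)) := by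
  intro r
  have := hμ
  have hf_lim : ∀ y ≠ 0, Tendsto (fun n => f n y) atTop (𝓝 (if y < 0 then 1 else 0)) :=
    fun y hy => (hfunif |y| (abs_pos.2 hy)).tendsto_at (show |y| ≤ |y| from le_rfl)
  have hp_lim : ∀ s : ℝ, Tendsto (fun δ => p (r + s * δ)) (𝓝[>] 0) (𝓝 (p r)) := fun s =>
    ((hpcont.comp (by fun_prop : Continuous fun δ : ℝ => r + s * δ)).tendsto' 0 _
      (by simp)).mono_left nhdsWithin_le_nhds
  refine tendsto_of_squeeze_family (G := 𝓝[>] (0 : ℝ))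
    (L := fun δ n => ∫ x, f n (x - (r - δ)) ∂μ n - f n δ)
    (U := fun δ n => ∫ x, f n (x - (r + δ)) ∂μ n + (1 - f n (-δ)))
    (l := fun δ => p (r + -1 * δ)) (u := fun δ => p (r + 1 * δ))
    ?_ ?_ (hp_lim (-1)) (hp_lim 1) ?_ ?_
  all_goals filter_upwards [self_mem_nhdsWithin] with δ (hδ : 0 < δ)
  · simpa [not_lt.2 hδ.le, sub_eq_add_neg] using (hconv (r - δ)).sub (hf_lim δ hδ.ne')
  · simpa [hδ] using (hconv (r + δ)).add ((hf_lim (-δ) (neg_ne_zero.2 hδ.ne')).const_sub 1)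
  · exact Eventually.of_forall fun n =>
      sub_le_iff_le_add.2 (integral_comp_sub_le_measure_Iio_add (hf01 n) (hfanti n).antitone r δ)
  · exact Eventually.of_forall fun n =>
      measure_Iio_le_integral_comp_sub_add (hf01 n) (hfanti n).antitone r δ

/-- elementary probability lemma: Let `f_n : ℝ → [0,1]` be
strictly decreasing with limits `1` at `−∞` and `0` at `+∞`, converging
uniformly on `ℝ \ [−δ,δ]` (for each `δ > 0`) to `𝟙(y<0)`. Let `μ n` be the
law of the random variable `X_n` and suppose `E[f_n(X_n − r)] → p(r)` for each
`r`, with `p` a continuous probability distribution function. Then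
`P(X_n < r) → p(r)` for every `r`, i.e. `X_n` converges weakly in distribution
to the law with distribution function `p`. -/
theorem stmt_11 (f : ℕ → ℝ → ℝ) (p : ℝ → ℝ)
    (hf01 : ∀ n y, f n y ∈ Set.Icc (0 : ℝ) 1)
    (hfanti : ∀ n, StrictAnti (f n))
    (hfbot : ∀ n, Filter.Tendsto (f n) Filter.atBot (nhds 1))
    (hftop : ∀ n, Filter.Tendsto (f n) Filter.atTop (nhds 0))
    (hfunif : ∀ δ : ℝ, 0 < δ →
      TendstoUniformlyOn f (fun y => if y < 0 then 1 else 0) Filter.atTop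
        {y : ℝ | δ ≤ |y|})
    (hpmono : Monotone p) (hpcont : Continuous p)
    (hpbot : Filter.Tendsto p Filter.atBot (nhds 0))
    (hptop : Filter.Tendsto p Filter.atTop (nhds 1))
    (μ : ℕ → Measure ℝ) (hμ : ∀ n, IsProbabilityMeasure (μ n))
    (hconv : ∀ r : ℝ,
      Filter.Tendsto (fun n => ∫ x, f n (x - r) ∂(μ n)) Filter.atTop (nhds (p r))) :
    ∀ r : ℝ,
      Filter.Tendsto (fun n => ((μ n) (Set.Iio r)).toReal) Filter.atTop (nhds (p r)) :=
  stmt_11_general f p hf01 hfanti hfunif hpcont μ hμ hconv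
end

section
/- Let q ∈ (0,1) and θ > 0. For Z ∈ ℂ with Re Z > 0 define f₀(Z) = −f(θ)(log q)Z + κ(θ) q^Z + Σ_{k=0}^∞ Log(1 − q^{Z+k}). Then f₀ is complex differentiable at every such Z, with derivative f₀'(Z) = −log q · Σ_{k=0}^∞ q^{2k}(q^θ − q^Z)² / ((1 − q^{θ+k})²(1 − q^{Z+k})). -/
/-!
Each term `log (1 - q ^ (W + k))` is holomorphic on `0 < re W` with derivative
`-log q * q ^ (W + k) / (1 - q ^ (W + k))`, and on a half-plane `δ < re W` these derivatives are
bounded by a multiple of `q ^ k`, so the series can be differentiated termwise. The stated formula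
then comes from the partial fraction identity
`(a - b)² / ((1 - a)² (1 - b)) = a² / (1 - a)² - b / (1 - a)² + b / (1 - b)`
with `a = q ^ (θ + k)` and `b = q ^ (Z + k)`: the three resulting series are `f(θ)`, `q ^ Z κ(θ)`
and the termwise derivative of the logarithmic series.
-/

open Complex

lemma norm_div_one_sub_le {K : Type*} [NormedDivisionRing K] {b : K} (hb : ‖b‖ < 1) :
    ‖b / (1 - b)‖ ≤ ‖b‖ / (1 - ‖b‖) := by
  have h : 1 - ‖b‖ ≤ ‖1 - b‖ := by simpa using norm_sub_norm_le (1 : K) b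
  rw [norm_div]
  exact div_le_div_of_nonneg_left (norm_nonneg b) (sub_pos.2 hb) h

section

variable {q : ℝ}

lemma ofReal_cpow_add_natCast (hq : 0 < q) (W : ℂ) (k : ℕ) :
    (q : ℂ) ^ (W + k) = (q : ℂ) ^ W * (q : ℂ) ^ k := by
  rw [cpow_add _ _ (ofReal_ne_zero.2 hq.ne'), cpow_natCast]

lemma norm_ofReal_cpow_add_natCast (hq : 0 < q) (W : ℂ) (k : ℕ) :
    ‖(q : ℂ) ^ (W + k)‖ = q ^ W.re * q ^ k := by
  rw [ofReal_cpow_add_natCast hq, norm_mul, norm_cpow_eq_rpow_re_of_pos hq, norm_pow, norm_real,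
    Real.norm_of_nonneg hq.le]

lemma norm_ofReal_cpow_add_natCast_le (hq0 : 0 < q) (hq1 : q < 1) {δ : ℝ} {W : ℂ}
    (hW : δ ≤ W.re) (k : ℕ) : ‖(q : ℂ) ^ (W + k)‖ ≤ q ^ δ * q ^ k := by
  rw [norm_ofReal_cpow_add_natCast hq0]
  exact mul_le_mul_of_nonneg_right (Real.rpow_le_rpow_of_exponent_ge hq0 hq1.le hW)
    (pow_nonneg hq0.le k)

lemma norm_ofReal_cpow_add_natCast_lt_one (hq0 : 0 < q) (hq1 : q < 1) {W : ℂ} (hW : 0 < W.re)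
    (k : ℕ) : ‖(q : ℂ) ^ (W + k)‖ < 1 := by
  rw [norm_ofReal_cpow_add_natCast hq0]
  exact mul_lt_one_of_nonneg_of_lt_one_left (Real.rpow_nonneg hq0.le _)
    (Real.rpow_lt_one hq0.le hq1 hW) (pow_le_one₀ hq0.le hq1.le)

lemma norm_cpow_div_one_sub_cpow_le (hq0 : 0 < q) (hq1 : q < 1) {δ : ℝ} (hδ : 0 < δ) {W : ℂ}
    (hW : δ ≤ W.re) (k : ℕ) :
    ‖(q : ℂ) ^ (W + k) / (1 - (q : ℂ) ^ (W + k))‖ ≤ q ^ δ / (1 - q ^ δ) * q ^ k := by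
  have hb := norm_ofReal_cpow_add_natCast_le hq0 hq1 hW k
  have hb' : ‖(q : ℂ) ^ (W + k)‖ ≤ q ^ δ :=
    hb.trans (mul_le_of_le_one_right (Real.rpow_nonneg hq0.le _) (pow_le_one₀ hq0.le hq1.le))
  have hqδ : q ^ δ < 1 := Real.rpow_lt_one hq0.le hq1 hδ
  calc ‖(q : ℂ) ^ (W + k) / (1 - (q : ℂ) ^ (W + k))‖
      ≤ ‖(q : ℂ) ^ (W + k)‖ / (1 - ‖(q : ℂ) ^ (W + k)‖) :=
        norm_div_one_sub_le (norm_ofReal_cpow_add_natCast_lt_one hq0 hq1 (hδ.trans_le hW) k)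
    _ ≤ q ^ δ * q ^ k / (1 - q ^ δ) := div_le_div₀ (by positivity) hb (by linarith) (by linarith)
    _ = q ^ δ / (1 - q ^ δ) * q ^ k := by ring

lemma hasDerivAt_log_one_sub_cpow (hq0 : 0 < q) (hq1 : q < 1) {W : ℂ} (hW : 0 < W.re) (k : ℕ) :
    HasDerivAt (fun W : ℂ => log (1 - (q : ℂ) ^ (W + k)))
      (-(Real.log q : ℂ) * ((q : ℂ) ^ (W + k) / (1 - (q : ℂ) ^ (W + k)))) W := by
  have hslit : 1 - (q : ℂ) ^ (W + k) ∈ slitPlane := by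
    rw [sub_eq_add_neg]
    exact mem_slitPlane_of_norm_lt_one
      (by simpa using norm_ofReal_cpow_add_natCast_lt_one hq0 hq1 hW k)
  have h := ((((hasDerivAt_id W).add_const (k : ℂ)).const_cpow
    (Or.inl (ofReal_ne_zero.2 hq0.ne'))).const_sub 1).clog hslit
  refine h.congr_deriv ?_
  rw [ofReal_log hq0.le, id_eq]
  ring

lemma summable_log_one_sub_cpow (hq0 : 0 < q) (hq1 : q < 1) (W : ℂ) :
    Summable (fun k : ℕ => log (1 - (q : ℂ) ^ (W + k))) := by
  have hq : ‖(q : ℂ)‖ < 1 := by rwa [norm_real, Real.norm_of_nonneg hq0.le]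
  have hgeo : Summable (fun k : ℕ => -(q : ℂ) ^ W * (q : ℂ) ^ k) :=
    (summable_geometric_of_norm_lt_one hq).mul_left _
  refine (summable_log_one_add_of_summable hgeo).congr fun k => ?_
  rw [ofReal_cpow_add_natCast hq0]
  ring_nf

lemma hasDerivAt_tsum_log_one_sub_cpow (hq0 : 0 < q) (hq1 : q < 1) {Z : ℂ} (hZ : 0 < Z.re) :
    HasDerivAt (fun W : ℂ => ∑' k : ℕ, log (1 - (q : ℂ) ^ (W + k)))
      (-(Real.log q : ℂ) * ∑' k : ℕ, (q : ℂ) ^ (Z + k) / (1 - (q : ℂ) ^ (Z + k))) Z := by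
  set δ := Z.re / 2
  have hδ : 0 < δ := half_pos hZ
  have hbound : ∀ (k : ℕ) (W : ℂ), W ∈ {W : ℂ | δ < W.re} →
      ‖-(Real.log q : ℂ) * ((q : ℂ) ^ (W + k) / (1 - (q : ℂ) ^ (W + k)))‖
        ≤ ‖(Real.log q : ℂ)‖ * (q ^ δ / (1 - q ^ δ)) * q ^ k := fun k W hW => by
    rw [norm_mul, norm_neg, mul_assoc]
    exact mul_le_mul_of_nonneg_left (norm_cpow_div_one_sub_cpow_le hq0 hq1 hδ (le_of_lt hW) k)
      (norm_nonneg _)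
  rw [← tsum_mul_left]
  exact hasDerivAt_tsum_of_isPreconnected
    ((summable_geometric_of_lt_one hq0.le hq1).mul_left _)
    (isOpen_lt continuous_const continuous_re) (convex_halfSpace_re_gt δ).isPreconnected
    (fun k W hW => hasDerivAt_log_one_sub_cpow hq0 hq1 (hδ.trans hW) k) hbound
    (half_lt_self hZ) (summable_log_one_sub_cpow hq0 hq1 Z) (half_lt_self hZ)

lemma summable_cpow_div_one_sub_cpow (hq0 : 0 < q) (hq1 : q < 1) {Z : ℂ} (hZ : 0 < Z.re) :
    Summable (fun k : ℕ => (q : ℂ) ^ (Z + k) / (1 - (q : ℂ) ^ (Z + k))) :=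
  .of_norm_bounded ((summable_geometric_of_lt_one hq0.le hq1).mul_left _)
    (norm_cpow_div_one_sub_cpow_le hq0 hq1 hZ le_rfl)

lemma one_sub_rpow_le_one_sub_rpow_add_natCast (hq0 : 0 < q) (hq1 : q < 1) (θ : ℝ) (k : ℕ) :
    1 - q ^ θ ≤ 1 - q ^ (θ + k) := by
  exact sub_le_sub_left
    (Real.rpow_le_rpow_of_exponent_ge hq0 hq1.le (le_add_of_nonneg_right k.cast_nonneg)) 1

lemma summable_pow_div_one_sub_rpow_sq (hq0 : 0 < q) (hq1 : q < 1) {θ : ℝ} (hθ : 0 < θ) :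
    Summable (fun k : ℕ => q ^ k / (1 - q ^ (θ + k)) ^ 2) := by
  have hθ' : 0 < 1 - q ^ θ := sub_pos.2 (Real.rpow_lt_one hq0.le hq1 hθ)
  refine Summable.of_nonneg_of_le (fun k => by positivity) (fun k => ?_)
    ((summable_geometric_of_lt_one hq0.le hq1).div_const ((1 - q ^ θ) ^ 2))
  exact div_le_div_of_nonneg_left (pow_nonneg hq0.le k) (pow_pos hθ' 2)
    (pow_le_pow_left₀ hθ'.le (one_sub_rpow_le_one_sub_rpow_add_natCast hq0 hq1 θ k) 2)

lemma summable_rpow_div_one_sub_rpow_sq (hq0 : 0 < q) (hq1 : q < 1) {θ : ℝ} (hθ : 0 < θ) :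
    Summable (fun k : ℕ => q ^ (2 * θ + 2 * k) / (1 - q ^ (θ + k)) ^ 2) := by
  refine Summable.of_nonneg_of_le (fun k => by positivity) (fun k => ?_)
    (summable_pow_div_one_sub_rpow_sq hq0 hq1 hθ)
  gcongr
  rw [← Real.rpow_natCast]
  exact Real.rpow_le_rpow_of_exponent_ge hq0 hq1.le (by linarith)

lemma sq_sub_cpow_div_eq (hq0 : 0 < q) (hq1 : q < 1) {θ : ℝ} (hθ : 0 < θ) {Z : ℂ}
    (hZ : 0 < Z.re) (k : ℕ) :
    (q : ℂ) ^ (2 * k) * ((q : ℂ) ^ (θ : ℂ) - (q : ℂ) ^ Z) ^ 2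
        / ((((1 - q ^ (θ + (k : ℝ))) ^ 2 : ℝ) : ℂ) * (1 - (q : ℂ) ^ (Z + k)))
      = ((q ^ (2 * θ + 2 * (k : ℝ)) / (1 - q ^ (θ + (k : ℝ))) ^ 2 : ℝ) : ℂ)
        - (q : ℂ) ^ Z * ((q ^ k / (1 - q ^ (θ + (k : ℝ))) ^ 2 : ℝ) : ℂ)
        + (q : ℂ) ^ (Z + k) / (1 - (q : ℂ) ^ (Z + k)) := by
  have ha : ((q ^ (θ + (k : ℝ)) : ℝ) : ℂ) = (q : ℂ) ^ (θ : ℂ) * (q : ℂ) ^ k := by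
    rw [ofReal_cpow hq0.le, ofReal_add, ofReal_natCast, ofReal_cpow_add_natCast hq0]
  have ha2 : ((q ^ (2 * θ + 2 * (k : ℝ)) : ℝ) : ℂ) = ((q : ℂ) ^ (θ : ℂ) * (q : ℂ) ^ k) ^ 2 := by
    rw [← ha, ← ofReal_pow, ← Real.rpow_natCast, ← Real.rpow_mul hq0.le]
    ring_nf
  have ha1 : 1 - (q : ℂ) ^ (θ : ℂ) * (q : ℂ) ^ k ≠ 0 := by
    rw [← ha, ← ofReal_one, ← ofReal_sub, ofReal_ne_zero]
    exact (sub_pos.2 (Real.rpow_lt_one hq0.le hq1 (by positivity))).ne'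
  have hb1 : 1 - (q : ℂ) ^ Z * (q : ℂ) ^ k ≠ 0 := by
    have h := norm_ofReal_cpow_add_natCast_lt_one hq0 hq1 hZ k
    rw [ofReal_cpow_add_natCast hq0] at h
    exact sub_ne_zero.2 fun h1 => by simp [← h1] at h
  simp only [ofReal_div, ofReal_pow, ofReal_sub, ofReal_one, ha, ha2, ofReal_cpow_add_natCast hq0,
    pow_mul]
  field_simp
  ring

end

/-- For `q ∈ (0,1)`, `θ > 0` and `Z ∈ ℂ` with `Re Z > 0`, the
function `f₀(Z) = −f(θ)(log q)Z + κ(θ) q^Z + Σ_{k=0}^∞ Log(1 − q^(Z+k))` is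
complex differentiable with derivative
`f₀'(Z) = −log q · Σ_{k=0}^∞ q^(2k)(q^θ − q^Z)²/((1 − q^(θ+k))²(1 − q^(Z+k)))`. -/
theorem stmt_12 (q θ : ℝ) (hq : q ∈ Set.Ioo (0 : ℝ) 1) (hθ : 0 < θ) :
    let κ : ℝ := ∑' k : ℕ, q ^ (k : ℕ) / (1 - q ^ (θ + (k : ℝ))) ^ 2
    let f : ℝ := ∑' k : ℕ, q ^ (2 * θ + 2 * (k : ℝ)) / (1 - q ^ (θ + (k : ℝ))) ^ 2
    ∀ Z : ℂ, 0 < Z.re →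
      HasDerivAt
        (fun W : ℂ =>
          -(f : ℂ) * (Real.log q : ℂ) * W + (κ : ℂ) * (q : ℂ) ^ W
            + ∑' k : ℕ, Complex.log (1 - (q : ℂ) ^ (W + (k : ℕ))))
        (-(Real.log q : ℂ) *
          ∑' k : ℕ,
            (q : ℂ) ^ (2 * k) * ((q : ℂ) ^ (θ : ℂ) - (q : ℂ) ^ Z) ^ 2
              / ((((1 - q ^ (θ + (k : ℝ))) ^ 2 : ℝ) : ℂ) * (1 - (q : ℂ) ^ (Z + (k : ℕ))))) Z := by
  obtain ⟨hq0, hq1⟩ := hq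
  intro κ f Z hZ
  have hlin : HasDerivAt (fun W : ℂ => -(f : ℂ) * (Real.log q : ℂ) * W)
      (-(f : ℂ) * (Real.log q : ℂ)) Z := by
    simpa using (hasDerivAt_id Z).const_mul (-(f : ℂ) * (Real.log q : ℂ))
  have hexp : HasDerivAt (fun W : ℂ => (κ : ℂ) * (q : ℂ) ^ W)
      ((κ : ℂ) * ((q : ℂ) ^ Z * (Real.log q : ℂ))) Z := by
    simpa [ofReal_log hq0.le] using
      ((hasDerivAt_id Z).const_cpow (Or.inl (ofReal_ne_zero.2 hq0.ne'))).const_mul (κ : ℂ)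
  refine ((hlin.add hexp).add (hasDerivAt_tsum_log_one_sub_cpow hq0 hq1 hZ)).congr_deriv ?_
  have hf := summable_ofReal.2 (summable_rpow_div_one_sub_rpow_sq hq0 hq1 hθ)
  have hκ := (summable_ofReal.2 (summable_pow_div_one_sub_rpow_sq hq0 hq1 hθ)).mul_left ((q : ℂ) ^ Z)
  rw [tsum_congr (sq_sub_cpow_div_eq hq0 hq1 hθ hZ),
    (hf.sub hκ).tsum_add (summable_cpow_div_one_sub_cpow hq0 hq1 hZ), hf.tsum_sub hκ,
    tsum_mul_left, ← ofReal_tsum, ← ofReal_tsum]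
  ring
end

section
/- Let q ∈ (0,1) and θ > 0 satisfy q^θ ≤ 1/2, and let φ ∈ [π/4, π/2]. For s ≥ 0 put w(s) = q^θ + s e^{iφ} ∈ ℂ (so that 1 − q^k w(s) ≠ 0 for all k ≥ 0 when φ ∈ (0, π/2]). Then the function s ↦ G(s) := −f(θ) log|w(s)| + κ(θ) Re(w(s)) + Σ_{k=0}^∞ log|1 − q^k w(s)| is strictly increasing on [0,∞). (G(s) equals Re f₀ along the contour C_φ, where f₀(W) = −f(θ)(log q)W + κ(θ) q^W + log(q^W;q)_∞ and w = q^W; thus C_φ is steep descent for −Re f₀, which attains its maximum at θ, i.e. at s = 0.) -/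
/-!
Writing `a = q ^ θ` and `c = q ^ k`, expanding `κ` and `f` as series splits `G` into summands
`Re F_c (w)`, with `F_c (z) = c z / (1 - c a)² - (c a)² log z / (1 - c a)² + log (1 - c z)`.
One computes `F_c' (z) = -c² (z - a)² / ((1 - c a)² z (1 - c z))`, a double zero at the saddle
point `z = a`, so along `w = a + s e^{iφ}` the derivative of the summand is
`-(c s)² / (1 - c a)² · Re (e^{3iφ} / (w (1 - c w)))`. Multiplying out,
`Re (w (1 - c w) e^{-3iφ}) = a (1 - c a) cos 3φ + s (1 - 2 c a) cos 2φ - c s² cos φ`,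
which is `≤ 0` for `φ ∈ [π/4, π/2]` and `c a ≤ 1/2`, and `< 0` if moreover `c a < 1/2` and
`s > 0`. Hence every summand is monotone and the one with `k = 1` is strictly monotone.
-/

open Real Set
open Complex (I slitPlane normSq)

theorem strictMonoOn_tsum {ι α : Type*} [Preorder α] {g : ι → α → ℝ} {S : Set α} (i : ι)
    (hmono : ∀ k, MonotoneOn (g k) S) (hstrict : StrictMonoOn (g i) S)
    (hsum : ∀ s ∈ S, Summable fun k => g k s) :
    StrictMonoOn (fun s => ∑' k, g k s) S :=
  fun _ hx _ hy hxy =>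
    (hsum _ hx).tsum_lt_tsum (fun k => hmono k hx hy hxy.le) (hstrict hx hy hxy) (hsum _ hy)

lemma div_one_sub_sq_le {x y : ℝ} (hy : 0 ≤ y) (hx : x ≤ 1 / 2) : y / (1 - x) ^ 2 ≤ 4 * y := by
  have h : 1 / 4 ≤ (1 - x) ^ 2 := by nlinarith
  rw [div_le_iff₀ (by linarith)]
  nlinarith [mul_le_mul_of_nonneg_left h hy]

noncomputable section

/-- With `a = q ^ θ` and `c = q ^ k`, the `k`-th summand of `G`. -/
def descentTerm (a c : ℝ) (z : ℂ) : ℝ :=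
  c / (1 - c * a) ^ 2 * z.re - (c * a) ^ 2 / (1 - c * a) ^ 2 * log ‖z‖ + log ‖1 - c * z‖

def descentTermC (a c : ℝ) (z : ℂ) : ℂ :=
  (c / (1 - c * a) ^ 2 : ℝ) * z - ((c * a) ^ 2 / (1 - c * a) ^ 2 : ℝ) * Complex.log z
    + Complex.log (1 - c * z)

end

section Summand

variable {a c s φ : ℝ}

lemma descentTermC_re (z : ℂ) : (descentTermC a c z).re = descentTerm a c z := by
  simp only [descentTermC, descentTerm, Complex.add_re, Complex.sub_re, Complex.re_ofReal_mul,
    Complex.log_re]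

lemma hasDerivAt_descentTermC {z : ℂ} (hca : c * a ≠ 1) (hz : z ∈ slitPlane)
    (hcz : 1 - c * z ∈ slitPlane) :
    HasDerivAt (descentTermC a c)
      (-(c ^ 2 * (z - a) ^ 2) / ((1 - c * a) ^ 2 * z * (1 - c * z))) z := by
  have hca' : (1 : ℂ) - c * a ≠ 0 := by
    rw [sub_ne_zero]
    exact_mod_cast hca.symm
  have hz₀ : z ≠ 0 := Complex.slitPlane_ne_zero hz
  have hcz₀ : 1 - c * z ≠ 0 := Complex.slitPlane_ne_zero hcz
  have h := (((hasDerivAt_id z).const_mul ((c / (1 - c * a) ^ 2 : ℝ) : ℂ)).sub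
    ((Complex.hasDerivAt_log hz).const_mul (((c * a) ^ 2 / (1 - c * a) ^ 2 : ℝ) : ℂ))).add
    (((hasDerivAt_id z).const_mul (c : ℂ)).const_sub 1 |>.clog hcz)
  refine h.congr_deriv ?_
  push_cast
  simp only [id, mul_one]
  field_simp
  ring

lemma hasDerivAt_descentTerm_line {e : ℂ} (hca : c * a ≠ 1)
    (hw : a + s * e ∈ slitPlane) (hcw : 1 - c * (a + s * e) ∈ slitPlane) :
    HasDerivAt (fun t : ℝ => descentTerm a c (a + t * e))
      (-(c * s) ^ 2 / (1 - c * a) ^ 2 * (e ^ 3 / ((a + s * e) * (1 - c * (a + s * e)))).re) s := by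
  have hline : HasDerivAt (fun z : ℂ => (a : ℂ) + z * e) e s := by
    simpa using ((hasDerivAt_id (s : ℂ)).mul_const e).const_add (a : ℂ)
  have h := ((hasDerivAt_descentTermC hca hw hcw).comp (s : ℂ) hline).real_of_complex
  simp only [Function.comp_def, descentTermC_re, add_sub_cancel_left] at h
  refine h.congr_deriv ?_
  rw [← Complex.re_ofReal_mul]
  congr 1
  push_cast
  -- `ring` does not split inverses of sums, so name the factors first
  generalize (a : ℂ) + s * e = W
  generalize (1 : ℂ) - c * W = V
  generalize (1 : ℂ) - c * a = D
  ring

lemma exp_mul_I_pow_three_div_re (P : ℂ) :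
    (Complex.exp (φ * I) ^ 3 / P).re
      = (P * Complex.exp (-φ * I) ^ 3).re / normSq (P * Complex.exp (-φ * I) ^ 3) := by
  rw [← Complex.inv_re, mul_inv, ← inv_pow, ← Complex.exp_neg, neg_mul, neg_neg, div_eq_mul_inv,
    mul_comm]

lemma line_mul_one_sub_mul_exp_re :
    ((a + s * Complex.exp (φ * I)) * (1 - c * (a + s * Complex.exp (φ * I)))
        * Complex.exp (-φ * I) ^ 3).re
      = a * (1 - c * a) * cos (3 * φ) + s * (1 - 2 * (c * a)) * cos (2 * φ)
        - c * s ^ 2 * cos φ := by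
  set E := Complex.exp (φ * I)
  set E' := Complex.exp (-φ * I)
  have hEE' : E * E' = 1 := by
    rw [← Complex.exp_add]
    ring_nf
    exact Complex.exp_zero
  have hre (n : ℕ) : (E' ^ n).re = cos (n * φ) := by
    rw [← Complex.exp_nat_mul, show (n : ℂ) * (-φ * I) = ↑(-(n * φ)) * I by push_cast; ring,
      Complex.exp_ofReal_mul_I_re, cos_neg]
  have hexpand : (a + s * E) * (1 - c * (a + s * E)) * E' ^ 3
      = ↑(a * (1 - c * a)) * E' ^ 3 + ↑(s * (1 - 2 * (c * a))) * E' ^ 2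
        - ↑(c * s ^ 2) * E' ^ 1 := by
    push_cast
    linear_combination (s * (1 - 2 * (c * a)) * E' ^ 2 - c * s ^ 2 * E' * (E * E' + 1)) * hEE'
  rw [hexpand]
  simp only [Complex.add_re, Complex.sub_re, Complex.re_ofReal_mul, hre]
  push_cast
  rw [one_mul]

lemma line_mem_slitPlane (ha : 0 < a) (hs : 0 ≤ s) (hφ : 0 ≤ cos φ) :
    (a : ℂ) + s * Complex.exp (φ * I) ∈ slitPlane := by
  refine Complex.mem_slitPlane_iff.2 (Or.inl ?_)
  simp only [Complex.add_re, Complex.ofReal_re, Complex.re_ofReal_mul,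
    Complex.exp_ofReal_mul_I_re]
  positivity

lemma one_sub_mul_line_mem_slitPlane (hc : 0 < c) (hca : c * a < 1) (hs : 0 ≤ s)
    (hφ : 0 < sin φ) :
    1 - c * ((a : ℂ) + s * Complex.exp (φ * I)) ∈ slitPlane := by
  rcases hs.eq_or_lt with rfl | hs
  · refine Complex.mem_slitPlane_iff.2 (Or.inl ?_)
    simp only [Complex.ofReal_zero, zero_mul, add_zero]
    norm_cast
    linarith
  · refine Complex.mem_slitPlane_iff.2 (Or.inr ?_)
    simp only [Complex.sub_im, Complex.one_im, Complex.im_ofReal_mul, Complex.add_im,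
      Complex.ofReal_im, Complex.exp_ofReal_mul_I_im]
    have : 0 < c * (0 + s * sin φ) := by positivity
    linarith

lemma cos_combination_nonpos (ha : 0 ≤ a) (hc : 0 ≤ c) (hs : 0 ≤ s) (hca : c * a ≤ 1 / 2)
    (hφ : φ ∈ Icc (π / 4) (π / 2)) :
    a * (1 - c * a) * cos (3 * φ) + s * (1 - 2 * (c * a)) * cos (2 * φ) - c * s ^ 2 * cos φ
      ≤ 0 := by
  obtain ⟨hφ₁, hφ₂⟩ := hφ
  have h3 : cos (3 * φ) ≤ 0 := cos_nonpos_of_pi_div_two_le_of_le (by linarith) (by linarith)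
  have h2 : cos (2 * φ) ≤ 0 := cos_nonpos_of_pi_div_two_le_of_le (by linarith) (by linarith)
  have h1 : 0 ≤ cos φ := cos_nonneg_of_mem_Icc ⟨by linarith [pi_pos], hφ₂⟩
  have t3 := mul_nonpos_of_nonneg_of_nonpos
    (mul_nonneg ha (by linarith : (0 : ℝ) ≤ 1 - c * a)) h3
  have t2 := mul_nonpos_of_nonneg_of_nonpos
    (mul_nonneg hs (by linarith : (0 : ℝ) ≤ 1 - 2 * (c * a))) h2
  have t1 := mul_nonneg (mul_nonneg hc (sq_nonneg s)) h1
  linarith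

lemma cos_combination_neg (ha : 0 ≤ a) (hc : 0 < c) (hs : 0 < s) (hca : c * a < 1 / 2)
    (hφ : φ ∈ Icc (π / 4) (π / 2)) :
    a * (1 - c * a) * cos (3 * φ) + s * (1 - 2 * (c * a)) * cos (2 * φ) - c * s ^ 2 * cos φ
      < 0 := by
  obtain ⟨hφ₁, hφ₂⟩ := hφ
  have h3 : cos (3 * φ) ≤ 0 := cos_nonpos_of_pi_div_two_le_of_le (by linarith) (by linarith)
  have t3 := mul_nonpos_of_nonneg_of_nonpos
    (mul_nonneg ha (by linarith : (0 : ℝ) ≤ 1 - c * a)) h3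
  rcases hφ₂.lt_or_eq with hφ₂ | rfl
  · have h2 : cos (2 * φ) ≤ 0 := cos_nonpos_of_pi_div_two_le_of_le (by linarith) (by linarith)
    have h1 : 0 < cos φ := cos_pos_of_mem_Ioo ⟨by linarith [pi_pos], hφ₂⟩
    have t2 := mul_nonpos_of_nonneg_of_nonpos
      (mul_nonneg hs.le (by linarith : (0 : ℝ) ≤ 1 - 2 * (c * a))) h2
    have t1 := mul_pos (mul_pos hc (pow_pos hs 2)) h1
    linarith
  · have t2 : 0 < s * (1 - 2 * (c * a)) := mul_pos hs (by linarith)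
    rw [show 2 * (π / 2) = π by ring, cos_pi, cos_pi_div_two]
    linarith

lemma hasDerivAt_descentTerm_line_exp (ha : 0 < a) (hc : 0 < c) (hca : c * a < 1) (hs : 0 ≤ s)
    (hφ : φ ∈ Ioc 0 (π / 2)) :
    HasDerivAt (fun t : ℝ => descentTerm a c (a + t * Complex.exp (φ * I)))
      ((c * s) ^ 2 / (1 - c * a) ^ 2
        * (-(a * (1 - c * a) * cos (3 * φ) + s * (1 - 2 * (c * a)) * cos (2 * φ)
              - c * s ^ 2 * cos φ)
          / normSq ((a + s * Complex.exp (φ * I)) * (1 - c * (a + s * Complex.exp (φ * I)))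
              * Complex.exp (-φ * I) ^ 3)))
      s := by
  have hcos : 0 ≤ cos φ := cos_nonneg_of_mem_Icc ⟨by linarith [pi_pos, hφ.1], hφ.2⟩
  have hsin : 0 < sin φ := sin_pos_of_pos_of_lt_pi hφ.1 (by linarith [pi_pos, hφ.2])
  have h := hasDerivAt_descentTerm_line hca.ne (line_mem_slitPlane ha hs hcos)
    (one_sub_mul_line_mem_slitPlane hc hca hs hsin)
  rw [exp_mul_I_pow_three_div_re, line_mul_one_sub_mul_exp_re] at h
  exact h.congr_deriv (by ring)

theorem monotoneOn_descentTerm_line (ha : 0 < a) (hc : 0 < c) (hca : c * a ≤ 1 / 2)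
    (hφ : φ ∈ Icc (π / 4) (π / 2)) :
    MonotoneOn (fun s : ℝ => descentTerm a c (a + s * Complex.exp (φ * I))) (Ici 0) := by
  have hderiv (s : ℝ) (hs : s ∈ Ici 0) :=
    hasDerivAt_descentTerm_line_exp ha hc (by linarith) hs ⟨by linarith [pi_pos, hφ.1], hφ.2⟩
  refine monotoneOn_of_hasDerivWithinAt_nonneg (convex_Ici 0)
    (fun s hs => (hderiv s hs).continuousAt.continuousWithinAt)
    (fun s hs => (hderiv s (interior_subset hs)).hasDerivWithinAt) fun s hs => ?_
  rw [interior_Ici] at hs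
  exact mul_nonneg (by positivity) (div_nonneg
    (neg_nonneg.2 (cos_combination_nonpos ha.le hc.le hs.le hca hφ)) (Complex.normSq_nonneg _))

theorem strictMonoOn_descentTerm_line (ha : 0 < a) (hc : 0 < c) (hca : c * a < 1 / 2)
    (hφ : φ ∈ Icc (π / 4) (π / 2)) :
    StrictMonoOn (fun s : ℝ => descentTerm a c (a + s * Complex.exp (φ * I))) (Ici 0) := by
  have hderiv (s : ℝ) (hs : s ∈ Ici 0) :=
    hasDerivAt_descentTerm_line_exp ha hc (by linarith) hs ⟨by linarith [pi_pos, hφ.1], hφ.2⟩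
  refine strictMonoOn_of_hasDerivWithinAt_pos (convex_Ici 0)
    (fun s hs => (hderiv s hs).continuousAt.continuousWithinAt)
    (fun s hs => (hderiv s (interior_subset hs)).hasDerivWithinAt) fun s hs => ?_
  rw [interior_Ici] at hs
  have hR := cos_combination_neg ha.le hc hs hca hφ
  have hQ : (a + s * Complex.exp (φ * I)) * (1 - c * (a + s * Complex.exp (φ * I)))
      * Complex.exp (-φ * I) ^ 3 ≠ 0 := fun h0 => by
    have := line_mul_one_sub_mul_exp_re (a := a) (c := c) (s := s) (φ := φ)
    rw [h0, Complex.zero_re] at this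
    linarith
  exact mul_pos (div_pos (pow_pos (mul_pos hc hs) 2) (pow_pos (by linarith) 2))
    (div_pos (neg_pos.2 hR) (Complex.normSq_pos.2 hQ))

end Summand

section Series

variable {q a : ℝ}

lemma pow_mul_le_half (hq₀ : 0 ≤ q) (hq₁ : q ≤ 1) (ha : 0 ≤ a) (ha' : a ≤ 1 / 2) (k : ℕ) :
    q ^ k * a ≤ 1 / 2 :=
  (mul_le_of_le_one_left ha (pow_le_one₀ hq₀ hq₁)).trans ha'

lemma summable_pow_div_one_sub_sq (hq₀ : 0 ≤ q) (hq₁ : q < 1) (ha : 0 ≤ a) (ha' : a ≤ 1 / 2) :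
    Summable fun k : ℕ => q ^ k / (1 - q ^ k * a) ^ 2 :=
  ((summable_geometric_of_lt_one hq₀ hq₁).mul_left 4).of_nonneg_of_le (fun k => by positivity)
    fun k => div_one_sub_sq_le (by positivity) (pow_mul_le_half hq₀ hq₁.le ha ha' k)

lemma summable_sq_div_one_sub_sq (hq₀ : 0 ≤ q) (hq₁ : q < 1) (ha : 0 ≤ a) (ha' : a ≤ 1 / 2) :
    Summable fun k : ℕ => (q ^ k * a) ^ 2 / (1 - q ^ k * a) ^ 2 := by
  refine ((summable_geometric_of_lt_one hq₀ hq₁).mul_left 4).of_nonneg_of_le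
    (fun k => by positivity) fun k => ?_
  have hqk : q ^ k * a ≤ 1 / 2 := pow_mul_le_half hq₀ hq₁.le ha ha' k
  have hq : 0 ≤ q ^ k := pow_nonneg hq₀ k
  have hsq : (q ^ k * a) ^ 2 ≤ q ^ k :=
    calc (q ^ k * a) ^ 2 ≤ q ^ k * a := by nlinarith [mul_nonneg hq ha]
      _ ≤ q ^ k := mul_le_of_le_one_right hq (by linarith)
  exact (div_one_sub_sq_le (sq_nonneg _) hqk).trans (by linarith)

lemma summable_log_norm_one_sub_pow_mul (hq₀ : 0 ≤ q) (hq₁ : q < 1) (z : ℂ) :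
    Summable fun k : ℕ => log ‖1 - (q : ℂ) ^ k * z‖ := by
  have hgeom : Summable fun k : ℕ => (q : ℂ) ^ k :=
    summable_geometric_of_norm_lt_one (by rwa [Complex.norm_real, norm_of_nonneg hq₀])
  have h := (Complex.summable_log_one_add_of_summable (hgeom.mul_right z).neg).hasSum
  simpa only [Complex.log_re, ← sub_eq_add_neg] using (Complex.hasSum_re h).summable

lemma hasSum_descentTerm (hq₀ : 0 ≤ q) (hq₁ : q < 1) (ha : 0 ≤ a) (ha' : a ≤ 1 / 2) (z : ℂ) :
    HasSum (fun k : ℕ => descentTerm a (q ^ k) z)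
      ((∑' k : ℕ, q ^ k / (1 - q ^ k * a) ^ 2) * z.re
        - (∑' k : ℕ, (q ^ k * a) ^ 2 / (1 - q ^ k * a) ^ 2) * log ‖z‖
        + ∑' k : ℕ, log ‖1 - (q : ℂ) ^ k * z‖) := by
  have h := (((summable_pow_div_one_sub_sq hq₀ hq₁ ha ha').hasSum.mul_right z.re).sub
    ((summable_sq_div_one_sub_sq hq₀ hq₁ ha ha').hasSum.mul_right (log ‖z‖))).add
    (summable_log_norm_one_sub_pow_mul hq₀ hq₁ z).hasSum
  simpa only [descentTerm, Complex.ofReal_pow] using h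

end Series

theorem stmt_14_general (q θ φ : ℝ) (hq : q ∈ Set.Ioo (0 : ℝ) 1)
    (hqθ : q ^ θ ≤ 1 / 2) (hφ : φ ∈ Set.Icc (Real.pi / 4) (Real.pi / 2)) :
    let κ : ℝ := ∑' k : ℕ, q ^ (k : ℕ) / (1 - q ^ (θ + (k : ℝ))) ^ 2
    let f : ℝ := ∑' k : ℕ, q ^ (2 * θ + 2 * (k : ℝ)) / (1 - q ^ (θ + (k : ℝ))) ^ 2
    let w : ℝ → ℂ := fun s =>
      ((q ^ θ : ℝ) : ℂ) + (s : ℂ) * Complex.exp ((φ : ℂ) * Complex.I)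
    StrictMonoOn
      (fun s : ℝ =>
        -f * Real.log ‖w s‖ + κ * (w s).re
          + ∑' k : ℕ, Real.log ‖1 - (q : ℂ) ^ (k : ℕ) * w s‖)
      (Set.Ici 0) := by
  intro κ f w
  obtain ⟨hq₀, hq₁⟩ := hq
  have ha : 0 < q ^ θ := rpow_pos_of_pos hq₀ θ
  have hκ : κ = ∑' k : ℕ, q ^ k / (1 - q ^ k * q ^ θ) ^ 2 :=
    tsum_congr fun k => by rw [rpow_add_natCast hq₀.ne', mul_comm]
  have hf : f = ∑' k : ℕ, (q ^ k * q ^ θ) ^ 2 / (1 - q ^ k * q ^ θ) ^ 2 :=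
    tsum_congr fun k => by
      rw [show 2 * θ + 2 * (k : ℝ) = (θ + k) + (θ + k) by ring, rpow_add hq₀,
        rpow_add_natCast hq₀.ne', mul_comm (q ^ θ)]
      ring
  have hG (s : ℝ) := hasSum_descentTerm hq₀.le hq₁ ha.le hqθ (w s)
  -- the `k = 0` summand need not be strictly monotone when `q ^ θ = 1 / 2`
  refine (strictMonoOn_tsum 1
    (fun k => monotoneOn_descentTerm_line ha (pow_pos hq₀ k)
      (pow_mul_le_half hq₀.le hq₁.le ha.le hqθ k) hφ)
    (strictMonoOn_descentTerm_line ha (pow_pos hq₀ 1) (by rw [pow_one]; nlinarith) hφ)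
    (fun s _ => (hG s).summable)).congr fun s _ => ?_
  beta_reduce
  rw [(hG s).tsum_eq, hκ, hf]
  ring

/-- For `q ∈ (0,1)`, `θ > 0` with `q^θ ≤ 1/2`, and
`φ ∈ [π/4, π/2]`, with `w(s) = q^θ + s e^{iφ}`, the function
`G(s) = −f(θ) log|w(s)| + κ(θ) Re(w(s)) + Σ_{k=0}^∞ log|1 − q^k w(s)|`
is strictly increasing on `[0,∞)`; i.e. the contour `C_φ` is steep descent for
`−Re f₀` with maximum at `θ` (`s = 0`). -/
theorem stmt_14 (q θ φ : ℝ) (hq : q ∈ Set.Ioo (0 : ℝ) 1) (hθ : 0 < θ)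
    (hqθ : q ^ θ ≤ 1 / 2) (hφ : φ ∈ Set.Icc (Real.pi / 4) (Real.pi / 2)) :
    let κ : ℝ := ∑' k : ℕ, q ^ (k : ℕ) / (1 - q ^ (θ + (k : ℝ))) ^ 2
    let f : ℝ := ∑' k : ℕ, q ^ (2 * θ + 2 * (k : ℝ)) / (1 - q ^ (θ + (k : ℝ))) ^ 2
    let w : ℝ → ℂ := fun s =>
      ((q ^ θ : ℝ) : ℂ) + (s : ℂ) * Complex.exp ((φ : ℂ) * Complex.I)
    StrictMonoOn
      (fun s : ℝ =>
        -f * Real.log ‖w s‖ + κ * (w s).re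
          + ∑' k : ℕ, Real.log ‖1 - (q : ℂ) ^ (k : ℕ) * w s‖)
      (Set.Ici 0) :=
  stmt_14_general q θ φ hq hqθ hφ
end

section
/- Let q ∈ (0,1) and θ > 0. Define, for Z ∈ ℂ with Re Z > 0, Re f₀(Z) = −f(θ)(log q) Re Z + κ(θ) Re(q^Z) + Σ_{k=0}^∞ log|1 − q^{Z+k}|. Then for every γ ≥ 0: (i) the map t ↦ Re f₀(θ + γ + it) is periodic with period 2π/|log q|, i.e. Re f₀(θ + γ + i(t + 2π/|log q|)) = Re f₀(θ + γ + it) for all t ∈ ℝ; (ii) it is even in t, Re f₀(θ + γ − it) = Re f₀(θ + γ + it); and (iii) it is strictly decreasing on [0, π/|log q|]. In particular, the vertical contour {θ + γ + it : t ∈ [π/log q, −π/log q]} is steep descent for Re f₀, which attains its maximum at t = 0. -/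
/-!
On the vertical line `Z = x + i t` put `c = cos (t log q)` and `a_k = q^(x+k)`. Then
`Re q^Z = q^x c` and `log |1 - q^(Z+k)| = log (1 - 2 a_k c + a_k²) / 2`, so `Re f₀` depends on `t`
only through `c`, which gives periodicity and evenness. Splitting `κ q^x c` as
`Σ a_k c / (1 - q^(θ+k))²`, the rest of `Re f₀` is a sum over `k` of functions of `c` that are
strictly increasing for `c ≤ 1`: the slope of `log (1 - 2 a_k c + a_k²) / 2` is at least
`-a_k / (1 - a_k)²`, and `1 - a_k ≥ 1 - q^(θ+k)` because `x ≥ θ`. As `c` strictly decreases on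
`[0, π/|log q|]`, so does `Re f₀`.
-/

open Real Set

namespace Complex

lemma ofReal_cpow_add_mul_I {q : ℝ} (hq : 0 < q) (x t : ℝ) :
    (q : ℂ) ^ ((x : ℂ) + t * I) = ((q ^ x : ℝ) : ℂ) * exp ((t * Real.log q : ℝ) * I) := by
  have hlog :
      log q * ((x : ℂ) + t * I) = ((x * Real.log q : ℝ) : ℂ) + (t * Real.log q : ℝ) * I := by
    rw [← ofReal_log hq.le]; push_cast; ring
  rw [cpow_def_of_ne_zero (ofReal_ne_zero.mpr hq.ne'), hlog, exp_add, ← ofReal_exp,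
    rpow_def_of_pos hq, mul_comm x]

lemma re_ofReal_cpow_add_mul_I {q : ℝ} (hq : 0 < q) (x t : ℝ) :
    ((q : ℂ) ^ ((x : ℂ) + t * I)).re = q ^ x * Real.cos (t * Real.log q) := by
  rw [ofReal_cpow_add_mul_I hq, re_ofReal_mul, exp_ofReal_mul_I_re]

lemma norm_one_sub_ofReal_mul_exp_mul_I_sq (a φ : ℝ) :
    ‖1 - (a : ℂ) * exp (φ * I)‖ ^ 2 = 1 - 2 * a * Real.cos φ + a ^ 2 := by
  rw [Complex.sq_norm, normSq_apply]
  simp only [sub_re, sub_im, one_re, one_im, re_ofReal_mul, im_ofReal_mul,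
    exp_ofReal_mul_I_re, exp_ofReal_mul_I_im]
  nlinarith [Real.sin_sq_add_cos_sq φ]

lemma log_norm_one_sub_ofReal_cpow_add_mul_I {q : ℝ} (hq : 0 < q) (x t : ℝ) :
    Real.log ‖1 - (q : ℂ) ^ ((x : ℂ) + t * I)‖
      = Real.log (1 - 2 * q ^ x * Real.cos (t * Real.log q) + (q ^ x) ^ 2) / 2 := by
  rw [ofReal_cpow_add_mul_I hq, ← norm_one_sub_ofReal_mul_exp_mul_I_sq, Real.log_pow]
  push_cast
  ring

end Complex

lemma sq_one_sub_le_one_sub_two_mul_add_sq {a c : ℝ} (ha : 0 ≤ a) (hc : c ≤ 1) :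
    (1 - a) ^ 2 ≤ 1 - 2 * a * c + a ^ 2 := by
  nlinarith

lemma abs_log_one_sub_two_mul_add_sq_le {a c : ℝ} (ha : 0 ≤ a) (ha1 : a < 1) (hc : |c| ≤ 1) :
    |log (1 - 2 * a * c + a ^ 2)| ≤ 2 * a / (1 - a) := by
  obtain ⟨hc₁, hc₂⟩ := abs_le.mp hc
  have h1a : 0 < 1 - a := by linarith
  have hlow := sq_one_sub_le_one_sub_two_mul_add_sq ha hc₂
  have hu : 0 < 1 - 2 * a * c + a ^ 2 := lt_of_lt_of_le (by positivity) hlow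
  rw [abs_le]
  constructor
  · calc -(2 * a / (1 - a)) = 2 * (1 - (1 - a)⁻¹) := by field_simp; ring
      _ ≤ 2 * log (1 - a) := by gcongr; exact one_sub_inv_le_log_of_pos h1a
      _ = log ((1 - a) ^ 2) := by rw [log_pow]; push_cast; ring
      _ ≤ log (1 - 2 * a * c + a ^ 2) := log_le_log (by positivity) hlow
  · calc log (1 - 2 * a * c + a ^ 2) ≤ 1 - 2 * a * c + a ^ 2 - 1 := log_le_sub_one_of_pos hu
      _ ≤ 2 * a / (1 - a) := by rw [le_div_iff₀ h1a]; nlinarith [mul_nonneg ha ha]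

lemma strictMonoOn_div_sq_mul_add_log_one_sub_two_mul_add_sq {a d : ℝ} (ha : 0 < a)
    (hd : 0 < d) (hda : d ≤ 1 - a) :
    StrictMonoOn (fun c => a / d ^ 2 * c + log (1 - 2 * a * c + a ^ 2) / 2) (Iic 1) := by
  intro c₁ _ c₂ hc₂ hlt
  set u₁ := 1 - 2 * a * c₁ + a ^ 2
  set u₂ := 1 - 2 * a * c₂ + a ^ 2
  have hu₂ : d ^ 2 ≤ u₂ :=
    (pow_le_pow_left₀ hd.le hda 2).trans (sq_one_sub_le_one_sub_two_mul_add_sq ha.le hc₂)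
  have hu₂0 : 0 < u₂ := lt_of_lt_of_le (by positivity) hu₂
  have hdiff : u₁ - u₂ = 2 * a * (c₂ - c₁) := by ring
  have hu₁0 : 0 < u₁ := by nlinarith
  have hlog : log u₁ - log u₂ < 2 * a * (c₂ - c₁) / u₂ := by
    rw [← log_div hu₁0.ne' hu₂0.ne', ← hdiff, sub_div, div_self hu₂0.ne']
    exact log_lt_sub_one_of_pos (by positivity)
      (by rw [ne_eq, div_eq_one_iff_eq hu₂0.ne']; nlinarith)
  have hslope : 2 * a * (c₂ - c₁) / u₂ ≤ 2 * (a / d ^ 2) * (c₂ - c₁) := by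
    calc 2 * a * (c₂ - c₁) / u₂ ≤ 2 * a * (c₂ - c₁) / d ^ 2 :=
          div_le_div_of_nonneg_left (by nlinarith) (by positivity) hu₂
      _ = 2 * (a / d ^ 2) * (c₂ - c₁) := by ring
  simp only
  linarith

lemma StrictMonoOn.tsum {α ι : Type*} [PartialOrder α] [Nonempty ι] {f : ι → α → ℝ} {s : Set α}
    (hf : ∀ i, StrictMonoOn (f i) s) (hs : ∀ x ∈ s, Summable fun i => f i x) :
    StrictMonoOn (fun x => ∑' i, f i x) s := fun _ hx _ hy hxy =>
  Summable.tsum_lt_tsum (fun i => (hf i).monotoneOn hx hy hxy.le)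
    (hf (Classical.arbitrary ι) hx hy hxy) (hs _ hx) (hs _ hy)

lemma strictAntiOn_cos_mul {L : ℝ} (hL : L ≠ 0) :
    StrictAntiOn (fun t => cos (t * L)) (Icc 0 (π / |L|)) := by
  have hL' : 0 < |L| := abs_pos.mpr hL
  intro s hs t ht hst
  simp only
  rw [← cos_abs (s * L), ← cos_abs (t * L), abs_mul, abs_mul, abs_of_nonneg hs.1,
    abs_of_nonneg ht.1]
  exact strictAntiOn_cos ⟨by positivity [hs.1], (le_div_iff₀ hL').mp hs.2⟩
    ⟨by positivity [ht.1], (le_div_iff₀ hL').mp ht.2⟩ (by gcongr)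

/-- `Re f₀ (x + i t) + f(θ) x log q` as a function of `c = cos (t log q)`. -/
noncomputable def verticalProfile (q θ x c : ℝ) : ℝ :=
  ∑' k : ℕ, (q ^ (x + k) / (1 - q ^ (θ + k)) ^ 2 * c
    + log (1 - 2 * q ^ (x + k) * c + (q ^ (x + k)) ^ 2) / 2)

section verticalProfile

variable {q θ x : ℝ}

lemma rpow_add_natCast_div_mul (hq0 : 0 < q) (k : ℕ) (d c : ℝ) :
    q ^ (x + k) / d * c = q ^ k / d * (q ^ x * c) := by
  rw [rpow_add hq0, rpow_natCast]; ring

lemma summable_pow_div_one_sub_rpow_add_sq (hq0 : 0 < q) (hq1 : q < 1) (hθ : 0 < θ) :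
    Summable fun k : ℕ => q ^ k / (1 - q ^ (θ + k)) ^ 2 := by
  have hqθ : q ^ θ < 1 := rpow_lt_one hq0.le hq1 hθ
  refine Summable.of_nonneg_of_le (fun k => by positivity) (fun k => ?_)
    ((summable_geometric_of_lt_one hq0.le hq1).div_const ((1 - q ^ θ) ^ 2))
  have hle : q ^ (θ + k) ≤ q ^ θ :=
    rpow_le_rpow_of_exponent_ge hq0 hq1.le (le_add_of_nonneg_right k.cast_nonneg)
  gcongr

lemma summable_log_one_sub_two_mul_rpow_add_sq (hq0 : 0 < q) (hq1 : q < 1) (hx : 0 < x) {c : ℝ}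
    (hc : |c| ≤ 1) :
    Summable fun k : ℕ => log (1 - 2 * q ^ (x + k) * c + (q ^ (x + k)) ^ 2) := by
  have hqx : q ^ x < 1 := rpow_lt_one hq0.le hq1 hx
  refine Summable.of_norm_bounded
    ((summable_geometric_of_lt_one hq0.le hq1).mul_left (2 * q ^ x / (1 - q ^ x))) (fun k => ?_)
  have hle : q ^ (x + k) ≤ q ^ x :=
    rpow_le_rpow_of_exponent_ge hq0 hq1.le (le_add_of_nonneg_right k.cast_nonneg)
  calc ‖log (1 - 2 * q ^ (x + k) * c + (q ^ (x + k)) ^ 2)‖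
      ≤ 2 * q ^ (x + k) / (1 - q ^ (x + k)) :=
        abs_log_one_sub_two_mul_add_sq_le (by positivity) (hle.trans_lt hqx) hc
    _ ≤ 2 * q ^ (x + k) / (1 - q ^ x) := by gcongr
    _ = 2 * q ^ x / (1 - q ^ x) * q ^ k := by rw [rpow_add hq0, rpow_natCast]; ring

lemma verticalProfile_eq (hq0 : 0 < q) (hq1 : q < 1) (hθ : 0 < θ) (hx : 0 < x) {c : ℝ}
    (hc : |c| ≤ 1) :
    verticalProfile q θ x c
      = (∑' k : ℕ, q ^ k / (1 - q ^ (θ + k)) ^ 2) * (q ^ x * c)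
        + ∑' k : ℕ, log (1 - 2 * q ^ (x + k) * c + (q ^ (x + k)) ^ 2) / 2 := by
  simp only [verticalProfile, rpow_add_natCast_div_mul hq0]
  rw [Summable.tsum_add ((summable_pow_div_one_sub_rpow_add_sq hq0 hq1 hθ).mul_right _)
    ((summable_log_one_sub_two_mul_rpow_add_sq hq0 hq1 hx hc).div_const 2), tsum_mul_right]

lemma verticalProfile_strictMonoOn (hq0 : 0 < q) (hq1 : q < 1) (hθ : 0 < θ) (hθx : θ ≤ x) :
    StrictMonoOn (verticalProfile q θ x) (Icc (-1) 1) := by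
  refine StrictMonoOn.tsum (fun k => ?_) (fun c hc => ?_)
  · have hle : q ^ (x + k) ≤ q ^ (θ + k) :=
      rpow_le_rpow_of_exponent_ge hq0 hq1.le (by linarith)
    have hlt : q ^ (θ + k) < 1 := rpow_lt_one hq0.le hq1 (by positivity)
    exact (strictMonoOn_div_sq_mul_add_log_one_sub_two_mul_add_sq (by positivity)
      (sub_pos.mpr hlt) (by linarith)).mono Icc_subset_Iic_self
  · simp only [rpow_add_natCast_div_mul hq0]
    exact ((summable_pow_div_one_sub_rpow_add_sq hq0 hq1 hθ).mul_right _).add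
      ((summable_log_one_sub_two_mul_rpow_add_sq hq0 hq1 (by linarith) (abs_le.mpr hc)).div_const 2)

end verticalProfile

/-- For `q ∈ (0,1)`, `θ > 0`, with
`Re f₀(Z) = −f(θ)(log q) Re Z + κ(θ) Re(q^Z) + Σ log|1 − q^(Z+k)|`, for every
`γ ≥ 0` the map `t ↦ Re f₀(θ+γ+it)` is (i) periodic with period `2π/|log q|`,
(ii) even in `t`, and (iii) strictly decreasing on `[0, π/|log q|]`; i.e. the
vertical contour is steep descent for `Re f₀` with maximum at `t = 0`. -/
theorem stmt_15 (q θ : ℝ) (hq : q ∈ Set.Ioo (0 : ℝ) 1) (hθ : 0 < θ) :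
    let κ : ℝ := ∑' k : ℕ, q ^ (k : ℕ) / (1 - q ^ (θ + (k : ℝ))) ^ 2
    let f : ℝ := ∑' k : ℕ, q ^ (2 * θ + 2 * (k : ℝ)) / (1 - q ^ (θ + (k : ℝ))) ^ 2
    let F : ℂ → ℝ := fun Z =>
      -f * Real.log q * Z.re + κ * ((q : ℂ) ^ Z).re
        + ∑' k : ℕ, Real.log ‖(1 - (q : ℂ) ^ (Z + (k : ℕ)))‖
    ∀ γ : ℝ, 0 ≤ γ →
      (∀ t : ℝ,
        F (((θ + γ : ℝ) : ℂ) + ((t + 2 * Real.pi / |Real.log q| : ℝ) : ℂ) * Complex.I)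
          = F (((θ + γ : ℝ) : ℂ) + (t : ℂ) * Complex.I)) ∧
      (∀ t : ℝ,
        F (((θ + γ : ℝ) : ℂ) - (t : ℂ) * Complex.I)
          = F (((θ + γ : ℝ) : ℂ) + (t : ℂ) * Complex.I)) ∧
      StrictAntiOn (fun t : ℝ => F (((θ + γ : ℝ) : ℂ) + (t : ℂ) * Complex.I))
        (Set.Icc 0 (Real.pi / |Real.log q|)) := by
  intro κ f F γ hγ
  obtain ⟨hq0, hq1⟩ := hq
  have hlog : log q < 0 := log_neg hq0 hq1
  have hF : ∀ t : ℝ, F (((θ + γ : ℝ) : ℂ) + (t : ℂ) * Complex.I)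
      = -f * log q * (θ + γ) + verticalProfile q θ (θ + γ) (cos (t * log q)) := fun t => by
    have hshift : ∀ k : ℕ, ((θ + γ : ℝ) : ℂ) + (t : ℂ) * Complex.I + (k : ℕ)
        = ((θ + γ + k : ℝ) : ℂ) + (t : ℂ) * Complex.I := fun k => by push_cast; ring
    simp only [F, hshift, Complex.add_re, Complex.ofReal_re, Complex.re_ofReal_mul,
      Complex.I_re, mul_zero, add_zero, Complex.re_ofReal_cpow_add_mul_I hq0,
      Complex.log_norm_one_sub_ofReal_cpow_add_mul_I hq0]
    rw [verticalProfile_eq hq0 hq1 hθ (by positivity) (abs_cos_le_one _), add_assoc]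
  refine ⟨fun t => ?_, fun t => ?_, ?_⟩
  · have hperiod : (t + 2 * π / |log q|) * log q = t * log q - 2 * π := by
      rw [abs_of_neg hlog]; field_simp [hlog.ne]; ring
    rw [hF, hF, hperiod, cos_sub_two_pi]
  · have hneg : ((θ + γ : ℝ) : ℂ) - (t : ℂ) * Complex.I
        = ((θ + γ : ℝ) : ℂ) + ((-t : ℝ) : ℂ) * Complex.I := by push_cast; ring
    rw [hneg, hF, hF, neg_mul t, cos_neg]
  · rw [funext hF]
    exact ((verticalProfile_strictMonoOn hq0 hq1 hθ (by linarith)).comp_strictAntiOn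
      (strictAntiOn_cos_mul hlog.ne) fun t _ => ⟨neg_one_le_cos _, cos_le_one _⟩).const_add _
end

section
/- Let q ∈ (0,1). Then: (i) the function θ ↦ f(θ) = Σ_{k=0}^∞ q^{2θ+2k}/(1 − q^{θ+k})² is strictly decreasing on (0,∞); (ii) at θ₀ = log(1/2)/log q (i.e. when q^{θ₀} = 1/2) one has f(θ₀) − 1 = Σ_{k=1}^∞ q^{2k}/(2 − q^k)² ≥ 0; (iii) consequently, for every θ > 0, if f(θ) ≤ 1 then q^θ ≤ 1/2. -/
/-!
Writing `x = q ^ θ`, the series is `F(x) = ∑ₖ g(x qᵏ)` with `g(y) = (y / (1 - y))²`, which is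
strictly increasing on `[0, 1)`. Hence `F` is strictly increasing on `[0, 1)` and `f = F ∘ (q ^ ·)`
is strictly decreasing. At `x = 1/2` the term `k = 0` equals `1`, so `F(1/2) = 1 + (tail) ≥ 1`,
and `f θ = F(q ^ θ) ≤ 1 ≤ F(1/2)` forces `q ^ θ ≤ 1/2`.
-/

open Real Set

lemma strictMonoOn_sq_div_one_sub_sq :
    StrictMonoOn (fun y : ℝ => y ^ 2 / (1 - y) ^ 2) (Ico 0 1) := by
  intro a ha b hb hab
  have ha' : 0 < 1 - a := by linarith [ha.2]
  have hb' : 0 < 1 - b := by linarith [hb.2]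
  have hlt : a / (1 - a) < b / (1 - b) := by
    rw [div_lt_div_iff₀ ha' hb']
    nlinarith
  simpa only [div_pow] using pow_lt_pow_left₀ hlt (div_nonneg ha.1 ha'.le) two_ne_zero

noncomputable def sqRatioSeries (q x : ℝ) : ℝ :=
  ∑' k : ℕ, (x * q ^ k) ^ 2 / (1 - x * q ^ k) ^ 2

section sqRatioSeries

variable {q x : ℝ}

lemma mul_pow_mem_Ico (hx : x ∈ Ico 0 1) (hq0 : 0 ≤ q) (hq1 : q ≤ 1) (k : ℕ) :
    x * q ^ k ∈ Ico 0 1 :=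
  ⟨by have := hx.1; positivity,
    (mul_le_of_le_one_right hx.1 (pow_le_one₀ hq0 hq1)).trans_lt hx.2⟩

lemma summable_sqRatio (hx : x ∈ Ico 0 1) (hq0 : 0 ≤ q) (hq1 : q < 1) :
    Summable fun k : ℕ => (x * q ^ k) ^ 2 / (1 - x * q ^ k) ^ 2 := by
  have hx' : 0 < 1 - x := by linarith [hx.2]
  refine Summable.of_nonneg_of_le (fun k => by positivity) (fun k => ?_)
    ((summable_geometric_of_lt_one (sq_nonneg q) (by nlinarith)).mul_left ((x / (1 - x)) ^ 2))
  have hden : 1 - x ≤ 1 - x * q ^ k := by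
    linarith [mul_le_of_le_one_right hx.1 (pow_le_one₀ (n := k) hq0 hq1.le)]
  calc (x * q ^ k) ^ 2 / (1 - x * q ^ k) ^ 2 ≤ (x * q ^ k) ^ 2 / (1 - x) ^ 2 :=
        div_le_div_of_nonneg_left (sq_nonneg _) (pow_pos hx' 2) (pow_le_pow_left₀ hx'.le hden 2)
    _ = (x / (1 - x)) ^ 2 * (q ^ 2) ^ k := by field_simp; ring

lemma strictMonoOn_sqRatioSeries (hq0 : 0 ≤ q) (hq1 : q < 1) :
    StrictMonoOn (sqRatioSeries q) (Ico 0 1) := by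
  intro a ha b hb hab
  refine Summable.tsum_lt_tsum (i := 0) (fun k => ?_) ?_
    (summable_sqRatio ha hq0 hq1) (summable_sqRatio hb hq0 hq1)
  · exact strictMonoOn_sq_div_one_sub_sq.monotoneOn (mul_pow_mem_Ico ha hq0 hq1.le k)
      (mul_pow_mem_Ico hb hq0 hq1.le k) (mul_le_mul_of_nonneg_right hab.le (by positivity))
  · simpa using strictMonoOn_sq_div_one_sub_sq ha hb hab

lemma sqRatioSeries_half (hq0 : 0 ≤ q) (hq1 : q < 1) :
    sqRatioSeries q (1 / 2) = 1 + ∑' k : ℕ, q ^ (2 * (k + 1)) / (2 - q ^ (k + 1)) ^ 2 := by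
  rw [sqRatioSeries, (summable_sqRatio (by norm_num) hq0 hq1).tsum_eq_zero_add]
  congr 1
  · norm_num
  · refine tsum_congr fun k => ?_
    rw [show 1 - 1 / 2 * q ^ (k + 1) = (2 - q ^ (k + 1)) / 2 by ring, div_pow, mul_pow,
      pow_mul', one_div_pow, one_div_mul_eq_div, div_div_div_cancel_right₀ (by norm_num)]

lemma rpow_sq_ratio_eq (hq : 0 < q) (θ : ℝ) (k : ℕ) :
    q ^ (2 * θ + 2 * (k : ℝ)) / (1 - q ^ (θ + (k : ℝ))) ^ 2
      = (q ^ θ * q ^ k) ^ 2 / (1 - q ^ θ * q ^ k) ^ 2 := by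
  rw [show 2 * θ + 2 * (k : ℝ) = (θ + k) * 2 by ring, rpow_mul hq.le, rpow_two,
    rpow_add hq, rpow_natCast]

end sqRatioSeries

/-- For `q ∈ (0,1)`: (i) `θ ↦ f(θ) = Σ q^(2θ+2k)/(1−q^(θ+k))²`
is strictly decreasing on `(0,∞)`; (ii) at `θ₀ = log(1/2)/log q` (where
`q^θ₀ = 1/2`) one has `f(θ₀) − 1 = Σ_{k=1}^∞ q^(2k)/(2−q^k)² ≥ 0`;
(iii) consequently for every `θ > 0`, `f(θ) ≤ 1` implies `q^θ ≤ 1/2`. -/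
theorem stmt_17 (q : ℝ) (hq : q ∈ Set.Ioo (0 : ℝ) 1) :
    let f : ℝ → ℝ := fun θ => ∑' k : ℕ, q ^ (2 * θ + 2 * (k : ℝ)) / (1 - q ^ (θ + (k : ℝ))) ^ 2
    StrictAntiOn f (Set.Ioi 0) ∧
    (f (Real.log (1 / 2) / Real.log q) - 1
        = ∑' k : ℕ, q ^ (2 * (k + 1)) / (2 - q ^ (k + 1)) ^ 2 ∧
      0 ≤ ∑' k : ℕ, q ^ (2 * (k + 1)) / (2 - q ^ (k + 1)) ^ 2) ∧
    ∀ θ : ℝ, 0 < θ → f θ ≤ 1 → q ^ θ ≤ 1 / 2 := by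
  intro f
  have hf (θ : ℝ) : f θ = sqRatioSeries q (q ^ θ) := tsum_congr (rpow_sq_ratio_eq hq.1 θ)
  have hmaps : MapsTo (fun θ : ℝ => q ^ θ) (Ioi 0) (Ico 0 1) := fun θ hθ =>
    ⟨(rpow_pos_of_pos hq.1 θ).le, rpow_lt_one hq.1.le hq.2 hθ⟩
  have hmono := strictMonoOn_sqRatioSeries hq.1.le hq.2
  have hhalf := sqRatioSeries_half hq.1.le hq.2
  have hθ₀ : q ^ (log (1 / 2) / log q) = 1 / 2 := rpow_logb hq.1 hq.2.ne (by norm_num)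
  have htail : 0 ≤ ∑' k : ℕ, q ^ (2 * (k + 1)) / (2 - q ^ (k + 1)) ^ 2 :=
    tsum_nonneg fun k => by have := hq.1; positivity
  refine ⟨fun a ha b hb hab => ?_, ⟨by rw [hf, hθ₀, hhalf]; ring, htail⟩, fun θ hθ hfθ => ?_⟩
  · rw [hf, hf]
    exact hmono (hmaps hb) (hmaps ha) (rpow_lt_rpow_of_exponent_gt hq.1 hq.2 hab)
  · exact (hmono.le_iff_le (hmaps hθ) (by norm_num)).1 (by rw [← hf, hhalf]; linarith)
end
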